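/- arXiv:1808.02092 — 8 statements merged into one kernel-verified Lean document; each statement's English description precedes it below -/
import Mathlib

section
/- Let k be a field, A a finite-dimensional k-algebra, and M a set of finite-dimensional A-modules. If M is hyperfinite, then the family of all finite direct sums of modules belonging to M is also hyperfinite. -/
/-!
Hyperfiniteness for families of finite-dimensional modules over a
finite-dimensional algebra `A` over a field `k`, following Elek.

A finite-dimensional `A`-module is bundled as a type together with an
`A`-module structure, a compatible `k`-vector space structure, which is
finite-dimensional over `k`.
-/

universe u

structure FdModule (k A : Type u) [Field k] [Ring A] [Algebra k A] : Type (u+1) where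
  carrier : Type u
  [acg : AddCommGroup carrier]
  [modA : Module A carrier]
  [modk : Module k carrier]
  [tower : IsScalarTower k A carrier]
  [fd : FiniteDimensional k carrier]

attribute [instance] FdModule.acg FdModule.modA FdModule.modk FdModule.tower FdModule.fd

variable {k A : Type u} [Field k] [Ring A] [Algebra k A]

/-- The `k`-dimension of a finite-dimensional `A`-module. -/
noncomputable def FdModule.dim (M : FdModule k A) : ℕ := Module.finrank k M.carrier

/-- A set `𝓜` of finite-dimensional `A`-modules is *hyperfinite* if for every `ε > 0`
there is `L_ε > 0` such that every `M ∈ 𝓜` has an `A`-submodule `P` with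
`dim_k P ≥ (1 - ε) · dim_k M` which is isomorphic to a finite direct sum of modules of
`k`-dimension at most `L_ε`; equivalently, `P` is the internal direct sum of finitely
many submodules `N j` of `k`-dimension at most `L_ε`. -/
def Hyperfinite (𝓜 : Set (FdModule k A)) : Prop :=
  ∀ ε : ℝ, 0 < ε → ∃ L : ℕ, 0 < L ∧
    ∀ M ∈ 𝓜, ∃ P : Submodule A M.carrier,
      (1 - ε) * (M.dim : ℝ) ≤ (Module.finrank k P : ℝ) ∧
      ∃ (t : ℕ) (N : Fin t → Submodule A M.carrier),
        (∀ j, Module.finrank k (N j) ≤ L) ∧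
        iSupIndep N ∧ (⨆ j, N j) = P

/-- The external direct sum of a finite family of finite-dimensional `A`-modules. -/
noncomputable def FdModule.dsum {k A : Type u} [Field k] [Ring A] [Algebra k A]
    {t : ℕ} (f : Fin t → FdModule k A) : FdModule k A where
  carrier := ∀ j, (f j).carrier

/-!
If every `M ∈ 𝓜` contains a submodule `P_M` of relative codimension at most `ε` that splits
into pieces of dimension at most `L_ε`, then in `M₁ ⊕ ⋯ ⊕ Mₜ` the submodule
`P_{M₁} ⊕ ⋯ ⊕ P_{Mₜ}` has relative codimension at most `ε` as well, and the pieces of all the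
`P_{Mᵢ}`, embedded by the coordinate inclusions, are still independent and still of dimension at
most `L_ε`. So the same `L_ε` works for the direct sums.
-/

theorem iSupIndep.sigma {α ι : Type*} [CompleteLattice α] [IsModularLattice α] [Finite ι]
    {β : ι → Type*} [∀ i, Finite (β i)] {f : Sigma β → α}
    (hs : iSupIndep fun i => ⨆ b, f ⟨i, b⟩) (hg : ∀ i, iSupIndep fun b => f ⟨i, b⟩) :
    iSupIndep f := by
  have := Fintype.ofFinite ι
  have (i : ι) := Fintype.ofFinite (β i)
  rw [iSupIndep_iff_supIndep_univ, ← Finset.univ_sigma_univ]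
  refine Finset.SupIndep.sigma ?_ fun i _ => (hg i).sup_indep_univ
  simpa only [Finset.sup_univ_eq_iSup] using hs.sup_indep_univ

theorem iSupIndep.exists_fin_reindex {α ι : Type*} [CompleteLattice α] [Finite ι]
    {N : ι → α} (hN : iSupIndep N) {p : α → Prop} (hp : ∀ i, p (N i)) :
    ∃ (t : ℕ) (N' : Fin t → α), (∀ j, p (N' j)) ∧ iSupIndep N' ∧ ⨆ j, N' j = ⨆ i, N i :=
  ⟨_, N ∘ (Finite.equivFin ι).symm, fun _ => hp _, hN.comp (Equiv.injective _),
    (Equiv.surjective _).iSup_comp N⟩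

namespace Submodule

theorem finrank_map_of_injective {K R V W : Type*} [Semiring K] [Semiring R] [SMul K R]
    [AddCommMonoid V] [Module K V] [Module R V] [IsScalarTower K R V]
    [AddCommMonoid W] [Module K W] [Module R W] [IsScalarTower K R W]
    {f : V →ₗ[R] W} (hf : Function.Injective f) (S : Submodule R V) :
    Module.finrank K (S.map f) = Module.finrank K S :=
  ((equivMapOfInjective f hf S).restrictScalars K).finrank_eq.symm

section Pi

variable {R ι : Type*} {φ : ι → Type*}

section Semiring

variable [Semiring R] [∀ i, AddCommMonoid (φ i)] [∀ i, Module R (φ i)]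

theorem iSupIndep_range_single [DecidableEq ι] :
    iSupIndep fun i => LinearMap.range (LinearMap.single R φ i) := by
  intro i
  simpa using LinearMap.disjoint_single_single R φ {i} {i}ᶜ disjoint_compl_right

def piUnivEquiv (p : ∀ i, Submodule R (φ i)) : pi Set.univ p ≃ₗ[R] ∀ i, p i where
  toFun x i := ⟨x.1 i, x.2 i trivial⟩
  invFun y := ⟨fun i => y i, fun i _ => (y i).2⟩
  map_add' _ _ := rfl
  map_smul' _ _ := rfl
  left_inv _ := rfl
  right_inv _ := rfl

end Semiring

variable [Ring R] [∀ i, AddCommGroup (φ i)] [∀ i, Module R (φ i)]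

theorem finrank_pi_univ {K : Type*} [Field K] [Algebra K R] [Fintype ι] [∀ i, Module K (φ i)]
    [∀ i, IsScalarTower K R (φ i)] [∀ i, FiniteDimensional K (φ i)]
    (p : ∀ i, Submodule R (φ i)) :
    Module.finrank K (pi Set.univ p) = ∑ i, Module.finrank K (p i) := by
  have (i : ι) : FiniteDimensional K (p i) :=
    .of_injective ((p i).subtype.restrictScalars K) Subtype.val_injective
  rw [((piUnivEquiv p).restrictScalars K).finrank_eq, Module.finrank_pi_fintype]

variable [Finite ι] [DecidableEq ι] {κ : ι → Type*}

theorem iSupIndep_sigma_map_single [∀ i, Finite (κ i)] {N : ∀ i, κ i → Submodule R (φ i)}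
    (hN : ∀ i, iSupIndep (N i)) :
    iSupIndep fun σ : Σ i, κ i => (N σ.1 σ.2).map (LinearMap.single R φ σ.1) := by
  refine iSupIndep.sigma ?_ fun i =>
    LinearMap.iSupIndep_map _ (LinearMap.ker_eq_bot.mp (LinearMap.ker_single R φ i)) (hN i)
  exact iSupIndep_range_single.mono fun i => iSup_le fun _ => LinearMap.map_le_range

theorem iSup_sigma_map_single (N : ∀ i, κ i → Submodule R (φ i)) :
    ⨆ σ : Σ i, κ i, (N σ.1 σ.2).map (LinearMap.single R φ σ.1) =
      pi Set.univ fun i => ⨆ j, N i j := by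
  rw [iSup_sigma, ← iSup_map_single]
  exact iSup_congr fun i => (Submodule.map_iSup (LinearMap.single R φ i) (N i)).symm

end Pi

end Submodule

theorem FdModule.dim_dsum {t : ℕ} (f : Fin t → FdModule k A) :
    (FdModule.dsum f).dim = ∑ i, (f i).dim :=
  Module.finrank_pi_fintype k

theorem stmt_2_general {k A : Type u} [Field k] [Ring A] [Algebra k A]
    (𝓜 : Set (FdModule k A)) (h : Hyperfinite 𝓜) :
    Hyperfinite {X : FdModule k A |
      ∃ (t : ℕ) (f : Fin t → FdModule k A), (∀ j, f j ∈ 𝓜) ∧ X = FdModule.dsum f} := by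
  intro ε hε
  obtain ⟨L, hL0, hL⟩ := h ε hε
  refine ⟨L, hL0, ?_⟩
  rintro _ ⟨t, f, hf, rfl⟩
  choose P hP s N hNL hN hNP using fun i => hL (f i) (hf i)
  refine ⟨Submodule.pi Set.univ P, ?_, ?_⟩
  · calc (1 - ε) * ((FdModule.dsum f).dim : ℝ)
        = ∑ i, (1 - ε) * ((f i).dim : ℝ) := by
          rw [FdModule.dim_dsum, Nat.cast_sum, Finset.mul_sum]
      _ ≤ ∑ i, (Module.finrank k (P i) : ℝ) := Finset.sum_le_sum fun i _ => hP i
      _ = Module.finrank k (Submodule.pi Set.univ P) := by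
          rw [Submodule.finrank_pi_univ, Nat.cast_sum]
  · obtain ⟨n, N', hN'L, hN', hN'P⟩ := (Submodule.iSupIndep_sigma_map_single hN).exists_fin_reindex
      (p := fun S => Module.finrank k S ≤ L)
      fun σ => (Submodule.finrank_map_of_injective
        (LinearMap.ker_eq_bot.mp (LinearMap.ker_single A _ σ.1)) _).trans_le (hNL σ.1 σ.2)
    refine ⟨n, N', hN'L, hN', hN'P.trans ?_⟩
    rw [Submodule.iSup_sigma_map_single]
    simp_rw [hNP]

/-- if `𝓜` is hyperfinite, so is the family of all finite direct sums of
modules belonging to `𝓜`. -/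
theorem stmt_2 {k A : Type u} [Field k] [Ring A] [Algebra k A] [FiniteDimensional k A]
    (𝓜 : Set (FdModule k A)) (h : Hyperfinite 𝓜) :
    Hyperfinite {X : FdModule k A |
      ∃ (t : ℕ) (f : Fin t → FdModule k A), (∀ j, f j ∈ 𝓜) ∧ X = FdModule.dsum f} :=
  stmt_2_general 𝓜 h
end

section
/- Let k be a field and A a finite-dimensional k-algebra. Let M and N be two sets of finite-dimensional A-modules, where N is hyperfinite. If there is some L ≥ 0 such that every M ∈ M has an A-submodule P ⊆ M with dim_k M − dim_k P ≤ L and P isomorphic to a module in N, then M is also hyperfinite. -/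
/-!
Hyperfiniteness for families of finite-dimensional modules over a
finite-dimensional algebra `A` over a field `k`, following Elek.

A finite-dimensional `A`-module is bundled as a type together with an
`A`-module structure, a compatible `k`-vector space structure, which is
finite-dimensional over `k`.
-/

universe u

variable {k A : Type u} [Field k] [Ring A] [Algebra k A]

/-!
Let `M ∈ 𝓜` contain a submodule `P ≅ N ∈ 𝓝` of codimension at most `L`. Hyperfiniteness of `𝓝`
with `ε / 2` yields a submodule of `N` that is a direct sum of small pieces and has dimension at
least `(1 - ε / 2) dim N`; its image in `M` has the same shape and, once `dim M ≥ 2L / ε`, dimension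
at least `(1 - ε) dim M`. Modules of dimension below `2L / ε` are themselves a single small piece.
-/

section BoundedDirectSum

variable (k) {M M' : Type*} [AddCommGroup M] [Module A M] [Module k M] [IsScalarTower k A M]
  [AddCommGroup M'] [Module A M'] [Module k M'] [IsScalarTower k A M']

def IsBoundedDirectSum (L : ℕ) (P : Submodule A M) : Prop :=
  ∃ (t : ℕ) (N : Fin t → Submodule A M),
    (∀ j, Module.finrank k (N j) ≤ L) ∧ iSupIndep N ∧ (⨆ j, N j) = P

variable {k}

theorem Submodule.finrank_top_of_isScalarTower :
    Module.finrank k (⊤ : Submodule A M) = Module.finrank k M :=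
  (Submodule.topEquiv.restrictScalars k).finrank_eq

theorem Submodule.finrank_map_of_injective_s5 (f : M →ₗ[A] M') (hf : Function.Injective f)
    (X : Submodule A M) : Module.finrank k (X.map f) = Module.finrank k X :=
  ((Submodule.equivMapOfInjective f hf X).restrictScalars k).symm.finrank_eq

theorem IsBoundedDirectSum.mono {L L' : ℕ} {P : Submodule A M} (hLL' : L ≤ L')
    (hP : IsBoundedDirectSum k L P) : IsBoundedDirectSum k L' P := by
  obtain ⟨t, N, hN, hindep, hsup⟩ := hP
  exact ⟨t, N, fun j => (hN j).trans hLL', hindep, hsup⟩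

theorem IsBoundedDirectSum.map {L : ℕ} {P : Submodule A M} (f : M →ₗ[A] M')
    (hf : Function.Injective f) (hP : IsBoundedDirectSum k L P) :
    IsBoundedDirectSum k L (P.map f) := by
  obtain ⟨t, N, hN, hindep, rfl⟩ := hP
  refine ⟨t, fun j => (N j).map f, fun j => ?_, f.iSupIndep_map hf hindep, ?_⟩
  · rw [Submodule.finrank_map_of_injective_s5 f hf]
    exact hN j
  · exact (Submodule.map_iSup f N).symm

theorem isBoundedDirectSum_top_of_finrank_le {L : ℕ} (hM : Module.finrank k M ≤ L) :
    IsBoundedDirectSum k L (⊤ : Submodule A M) :=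
  ⟨1, fun _ => ⊤, fun _ => Submodule.finrank_top_of_isScalarTower.trans_le hM,
    iSupIndep_subsingleton _, iSup_const⟩

end BoundedDirectSum

theorem hyperfinite_iff (𝓜 : Set (FdModule k A)) :
    Hyperfinite 𝓜 ↔ ∀ ε : ℝ, 0 < ε → ∃ L : ℕ, 0 < L ∧
      ∀ M ∈ 𝓜, ∃ P : Submodule A M.carrier,
        (1 - ε) * (M.dim : ℝ) ≤ (Module.finrank k P : ℝ) ∧ IsBoundedDirectSum k L P :=
  Iff.rfl

theorem one_sub_mul_le_of_le_add {ε d n q L : ℝ} (hε : 0 < ε) (hq : 0 ≤ q) (hL : 0 ≤ L)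
    (hdn : d ≤ L + n) (hnq : (1 - ε / 2) * n ≤ q) (hLd : 2 * L ≤ ε * d) :
    (1 - ε) * d ≤ q := by
  rcases le_or_gt ε 2 with hε2 | hε2
  · nlinarith
  · nlinarith

theorem stmt_5_general {k A : Type u} [Field k] [Ring A] [Algebra k A]
    (𝓜 𝓝 : Set (FdModule k A)) (h𝓝 : Hyperfinite 𝓝) (L : ℕ)
    (h : ∀ M ∈ 𝓜, ∃ P : Submodule A M.carrier,
      M.dim - Module.finrank k P ≤ L ∧
      ∃ N ∈ 𝓝, Nonempty (P ≃ₗ[A] N.carrier)) :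
    Hyperfinite 𝓜 := by
  rw [hyperfinite_iff] at h𝓝 ⊢
  intro ε hε
  obtain ⟨L', hL', h𝓝⟩ := h𝓝 (ε / 2) (by positivity)
  refine ⟨max L' ⌈2 * L / ε⌉₊, lt_max_of_lt_left hL', fun M hM => ?_⟩
  by_cases hsmall : M.dim ≤ max L' ⌈2 * L / ε⌉₊
  · refine ⟨⊤, ?_, isBoundedDirectSum_top_of_finrank_le hsmall⟩
    rw [Submodule.finrank_top_of_isScalarTower]
    exact mul_le_of_le_one_left (Nat.cast_nonneg _) (by linarith)
  obtain ⟨P, hPL, N, hN, ⟨e⟩⟩ := h M hM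
  obtain ⟨Q, hQ, hQsum⟩ := h𝓝 N hN
  have hf : Function.Injective (P.subtype ∘ₗ e.symm.toLinearMap) :=
    P.injective_subtype.comp e.symm.injective
  refine ⟨Q.map _, ?_, (hQsum.map _ hf).mono (le_max_left _ _)⟩
  have hMN : M.dim ≤ L + N.dim := by
    have hPN : Module.finrank k P = N.dim := (e.restrictScalars k).finrank_eq
    exact hPN ▸ Nat.sub_le_iff_le_add.mp hPL
  have hLM : 2 * (L : ℝ) ≤ ε * M.dim := by
    have := (Nat.ceil_le.mp ((le_max_right _ _).trans (not_le.mp hsmall).le))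
    rw [div_le_iff₀ hε] at this
    linarith
  rw [Submodule.finrank_map_of_injective_s5 _ hf]
  exact one_sub_mul_le_of_le_add hε (Nat.cast_nonneg _) (Nat.cast_nonneg _)
    (by exact_mod_cast hMN) hQ hLM

/-- if `𝓝` is hyperfinite and every module of `𝓜` has a submodule of
codimension at most `L` isomorphic to a module of `𝓝`, then `𝓜` is hyperfinite. -/
theorem stmt_5 {k A : Type u} [Field k] [Ring A] [Algebra k A] [FiniteDimensional k A]
    (𝓜 𝓝 : Set (FdModule k A)) (h𝓝 : Hyperfinite 𝓝) (L : ℕ)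
    (h : ∀ M ∈ 𝓜, ∃ P : Submodule A M.carrier,
      M.dim - Module.finrank k P ≤ L ∧
      ∃ N ∈ 𝓝, Nonempty (P ≃ₗ[A] N.carrier)) :
    Hyperfinite 𝓜 :=
  stmt_5_general 𝓜 𝓝 h𝓝 L h
end

section
/- Let k be a field and A, B two finite-dimensional k-algebras. Let F be an additive, left-exact functor from the category of finite-dimensional A-modules to the category of finite-dimensional B-modules, and suppose there exist constants K₁, K₂ > 0 such that K₁·dim_k X ≤ dim_k F(X) ≤ K₂·dim_k X for all finite-dimensional A-modules X. If N is a hyperfinite set of finite-dimensional A-modules, then the set {F(X) : X ∈ N} of B-modules is also hyperfinite. -/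
/-!
Hyperfiniteness for families of finite-dimensional modules over a
finite-dimensional algebra `A` over a field `k`, following Elek.

A finite-dimensional `A`-module is bundled as a type together with an
`A`-module structure, a compatible `k`-vector space structure, which is
finite-dimensional over `k`.
-/

universe u

variable {k A : Type u} [Field k] [Ring A] [Algebra k A]

section Functors

variable (k A B : Type u) [Field k] [Ring A] [Algebra k A] [Ring B] [Algebra k B]

/-- An additive functor from finite-dimensional `A`-modules to finite-dimensional
`B`-modules. -/
structure FdFunctor where
  obj : FdModule k A → FdModule k B
  map : ∀ {M N : FdModule k A}, (M.carrier →ₗ[A] N.carrier) →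
    ((obj M).carrier →ₗ[B] (obj N).carrier)
  map_id : ∀ M : FdModule k A, map (LinearMap.id (M := M.carrier)) = LinearMap.id
  map_comp : ∀ {M N P : FdModule k A} (f : M.carrier →ₗ[A] N.carrier)
    (g : N.carrier →ₗ[A] P.carrier), map (g ∘ₗ f) = map g ∘ₗ map f
  map_add : ∀ {M N : FdModule k A} (f g : M.carrier →ₗ[A] N.carrier),
    map (f + g) = map f + map g

variable {k A B}

/-- A functor is left exact if it preserves kernels: it maps any exact sequence
`0 → X → Y → Z` to an exact sequence `0 → F X → F Y → F Z`. -/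
def FdFunctor.LeftExact (F : FdFunctor k A B) : Prop :=
  ∀ {X Y Z : FdModule k A} (f : X.carrier →ₗ[A] Y.carrier) (g : Y.carrier →ₗ[A] Z.carrier),
    Function.Injective f → LinearMap.range f = LinearMap.ker g →
    Function.Injective (F.map f) ∧ LinearMap.range (F.map f) = LinearMap.ker (F.map g)

end Functors

/-!
If `P = N₁ ⊕ ⋯ ⊕ Nₜ ⊆ M` is the large, finely decomposed submodule given by hyperfiniteness of
`𝓝` at scale `εK₁/K₂`, then `0 → ⨁ Nⱼ → M → M/P` is exact. By left exactness `F(⨁ Nⱼ)` embeds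
into `F(M)` as the kernel of `F(M) → F(M/P)`, so its image has dimension at least
`dim F(M) - K₂ dim(M/P) ≥ dim F(M) - εK₁ dim M ≥ (1 - ε) dim F(M)`. Being additive, `F` preserves
the biproduct `⨁ Nⱼ`, so this image is the internal direct sum of the images of the `F(Nⱼ)`,
each of dimension at most `K₂ L`.
-/

open Module

structure IsBiproduct {R M : Type*} [Ring R] [AddCommGroup M] [Module R M]
    {ι : Type*} [Fintype ι] {N : ι → Type*} [∀ i, AddCommGroup (N i)]
    [∀ i, Module R (N i)] (incl : ∀ i, N i →ₗ[R] M) (proj : ∀ i, M →ₗ[R] N i) : Prop where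
  proj_comp_incl_self : ∀ i, proj i ∘ₗ incl i = LinearMap.id
  proj_comp_incl_of_ne : ∀ i j, i ≠ j → proj i ∘ₗ incl j = 0
  sum_incl_comp_proj : ∑ i, incl i ∘ₗ proj i = LinearMap.id

namespace IsBiproduct

variable {R M : Type*} [Ring R] [AddCommGroup M] [Module R M]
  {ι : Type*} [Fintype ι] {N : ι → Type*} [∀ i, AddCommGroup (N i)]
  [∀ i, Module R (N i)] {incl : ∀ i, N i →ₗ[R] M} {proj : ∀ i, M →ₗ[R] N i}

theorem iSupIndep_range (h : IsBiproduct incl proj) :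
    iSupIndep fun i => LinearMap.range (incl i) := by
  intro i
  rw [Submodule.disjoint_def]
  rintro _ ⟨y, rfl⟩ hy
  have hproj : ⨆ j, ⨆ _ : j ≠ i, LinearMap.range (incl j) ≤ LinearMap.ker (proj i) :=
    iSup₂_le fun j hj => LinearMap.range_le_ker_iff.mpr (h.proj_comp_incl_of_ne i j (Ne.symm hj))
  have hy0 : proj i (incl i y) = 0 := hproj hy
  rw [← LinearMap.comp_apply, h.proj_comp_incl_self, LinearMap.id_apply] at hy0
  simp [hy0]

theorem iSup_range_eq_top (h : IsBiproduct incl proj) :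
    ⨆ i, LinearMap.range (incl i) = ⊤ := by
  refine eq_top_iff.mpr fun x _ => ?_
  rw [← LinearMap.id_apply (R := R) x, ← h.sum_incl_comp_proj, LinearMap.sum_apply]
  exact Submodule.sum_mem _ fun i _ => Submodule.mem_iSup_of_mem i (LinearMap.mem_range_self _ _)

end IsBiproduct

theorem DirectSum.isBiproduct_lof_component (R : Type*) [Ring R] (ι : Type*) [Fintype ι]
    [DecidableEq ι] (N : ι → Type*) [∀ i, AddCommGroup (N i)] [∀ i, Module R (N i)] :
    IsBiproduct (DirectSum.lof R ι N) (DirectSum.component R ι N) where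
  proj_comp_incl_self i := by ext x; simp
  proj_comp_incl_of_ne i j hij := by ext x; simp [DirectSum.component.of, hij.symm]
  sum_incl_comp_proj := LinearMap.ext fun x => by
    rw [LinearMap.sum_apply]
    exact DirectSum.sum_univ_of x

section IsScalarTower

variable {K R X Y : Type*} [Field K] [Ring R] [Algebra K R]
  [AddCommGroup X] [Module R X] [Module K X] [IsScalarTower K R X] [FiniteDimensional K X]
  [AddCommGroup Y] [Module R Y] [Module K Y] [IsScalarTower K R Y]

theorem LinearMap.finrank_range_le_of_isScalarTower (f : X →ₗ[R] Y) :
    finrank K (range f) ≤ finrank K X :=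
  (f.restrictScalars K).finrank_range_le

theorem LinearMap.finrank_le_finrank_ker_add_of_isScalarTower [FiniteDimensional K Y]
    (g : X →ₗ[R] Y) : finrank K X ≤ finrank K (ker g) + finrank K Y := by
  have hrank := (g.restrictScalars K).finrank_range_add_finrank_ker
  have hrange : finrank K (range g) ≤ finrank K Y :=
    Submodule.finrank_le ((range g).restrictScalars K)
  change finrank K (range g) + finrank K (ker g) = finrank K X at hrank
  omega

end IsScalarTower

namespace FdModule

abbrev submodule (M : FdModule k A) (S : Submodule A M.carrier) : FdModule k A where
  carrier := S
  fd := .of_injective ((S.subtype).restrictScalars k) S.injective_subtype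

abbrev quotient (M : FdModule k A) (S : Submodule A M.carrier) : FdModule k A where
  carrier := M.carrier ⧸ S
  fd := .of_surjective ((S.mkQ).restrictScalars k) S.mkQ_surjective

abbrev directSum (M : FdModule k A) {ι : Type} [Fintype ι]
    (N : ι → Submodule A M.carrier) : FdModule k A where
  carrier := DirectSum ι fun i => N i
  fd := by
    have (i : ι) : FiniteDimensional k (N i) := (M.submodule (N i)).fd
    infer_instance

theorem dim_quotient_add_finrank (M : FdModule k A) (S : Submodule A M.carrier) :
    (M.quotient S).dim + finrank k S = M.dim :=
  Submodule.finrank_quotient_add_finrank (S.restrictScalars k)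

end FdModule

namespace FdFunctor

variable {B : Type u} [Ring B] [Algebra k B] (F : FdFunctor k A B)

def mapAddHom (X Y : FdModule k A) :
    (X.carrier →ₗ[A] Y.carrier) →+ ((F.obj X).carrier →ₗ[B] (F.obj Y).carrier) :=
  AddMonoidHom.mk' F.map F.map_add

theorem map_zero (X Y : FdModule k A) : F.map (0 : X.carrier →ₗ[A] Y.carrier) = 0 :=
  (F.mapAddHom X Y).map_zero

theorem map_sum {X Y : FdModule k A} {ι : Type*} (s : Finset ι)
    (f : ι → X.carrier →ₗ[A] Y.carrier) : F.map (∑ i ∈ s, f i) = ∑ i ∈ s, F.map (f i) :=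
  _root_.map_sum (F.mapAddHom X Y) f s

theorem isBiproduct_map {X : FdModule k A} {ι : Type*} [Fintype ι]
    {Y : ι → FdModule k A} {incl : ∀ i, (Y i).carrier →ₗ[A] X.carrier}
    {proj : ∀ i, X.carrier →ₗ[A] (Y i).carrier} (h : IsBiproduct incl proj) :
    IsBiproduct (fun i => F.map (incl i)) (fun i => F.map (proj i)) where
  proj_comp_incl_self i := by rw [← F.map_comp, h.proj_comp_incl_self, F.map_id]
  proj_comp_incl_of_ne i j hij := by rw [← F.map_comp, h.proj_comp_incl_of_ne i j hij, F.map_zero]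
  sum_incl_comp_proj := by
    simp only [← F.map_comp, ← F.map_sum, h.sum_incl_comp_proj, F.map_id]

theorem LeftExact.exists_decomposition_of_iSupIndep {F : FdFunctor k A B} (hF : F.LeftExact)
    (M : FdModule k A) {ι : Type} [Fintype ι] [DecidableEq ι] {N : ι → Submodule A M.carrier}
    (hN : iSupIndep N) :
    ∃ (P : Submodule B (F.obj M).carrier) (N' : ι → Submodule B (F.obj M).carrier),
      (F.obj M).dim ≤ finrank k P + (F.obj (M.quotient (⨆ i, N i))).dim ∧
      (∀ i, finrank k (N' i) ≤ (F.obj (M.submodule (N i))).dim) ∧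
      iSupIndep N' ∧ ⨆ i, N' i = P := by
  let σ : (M.directSum N).carrier →ₗ[A] M.carrier := DirectSum.coeLinearMap N
  let q : M.carrier →ₗ[A] (M.quotient (⨆ i, N i)).carrier := (⨆ i, N i).mkQ
  obtain ⟨hFσ_inj, hFσ_range⟩ := hF σ q hN.dfinsupp_lsum_injective
    (by rw [DirectSum.range_coeLinearMap, Submodule.ker_mkQ])
  let incl (i : ι) : (M.submodule (N i)).carrier →ₗ[A] (M.directSum N).carrier :=
    DirectSum.lof A ι (fun i => N i) i
  let proj (i : ι) : (M.directSum N).carrier →ₗ[A] (M.submodule (N i)).carrier :=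
    DirectSum.component A ι (fun i => N i) i
  have hsplit : IsBiproduct (fun i => F.map (incl i)) (fun i => F.map (proj i)) :=
    F.isBiproduct_map (DirectSum.isBiproduct_lof_component A ι fun i => N i)
  refine ⟨LinearMap.range (F.map σ), fun i => (LinearMap.range (F.map (incl i))).map (F.map σ),
    ?_, fun i => ?_, LinearMap.iSupIndep_map _ hFσ_inj hsplit.iSupIndep_range, ?_⟩
  · rw [hFσ_range]
    exact (F.map q).finrank_le_finrank_ker_add_of_isScalarTower
  · show finrank k ((LinearMap.range (F.map (incl i))).map (F.map σ)) ≤ _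
    rw [← LinearMap.range_comp]
    exact LinearMap.finrank_range_le_of_isScalarTower _
  · rw [← Submodule.map_iSup, hsplit.iSup_range_eq_top, Submodule.map_top]

end FdFunctor

theorem stmt_6_general {k A B : Type u} [Field k] [Ring A] [Algebra k A] [Ring B] [Algebra k B]
    (F : FdFunctor k A B) (hle : F.LeftExact)
    (K₁ K₂ : ℝ) (hK₁ : 0 < K₁) (hK₂ : 0 < K₂)
    (hdim : ∀ X : FdModule k A,
      K₁ * (X.dim : ℝ) ≤ ((F.obj X).dim : ℝ) ∧ ((F.obj X).dim : ℝ) ≤ K₂ * (X.dim : ℝ))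
    (𝓝 : Set (FdModule k A)) (h : Hyperfinite 𝓝) :
    Hyperfinite (F.obj '' 𝓝) := by
  intro ε hε
  obtain ⟨L, -, hL⟩ := h (ε * K₁ / K₂) (by positivity)
  refine ⟨max 1 ⌈K₂ * L⌉₊, lt_max_of_lt_left one_pos, ?_⟩
  rintro _ ⟨M, hM, rfl⟩
  obtain ⟨P, hP, t, N, hNL, hN, rfl⟩ := hL M hM
  obtain ⟨P', N', hP', hN'L, hN', hsup⟩ := hle.exists_decomposition_of_iSupIndep M hN
  refine ⟨P', ?_, t, N', fun i => ?_, hN', hsup⟩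
  · set Q := M.quotient (⨆ i, N i)
    have hQ : (Q.dim : ℝ) + finrank k ↥(⨆ i, N i) = M.dim := by
      exact_mod_cast M.dim_quotient_add_finrank _
    have hFQ : ((F.obj Q).dim : ℝ) ≤ ε * (F.obj M).dim :=
      calc ((F.obj Q).dim : ℝ) ≤ K₂ * Q.dim := (hdim Q).2
        _ ≤ K₂ * (ε * K₁ / K₂ * M.dim) := by gcongr; linarith
        _ = ε * (K₁ * M.dim) := by field_simp
        _ ≤ ε * (F.obj M).dim := by gcongr; exact (hdim M).1
    have hP'Q : ((F.obj M).dim : ℝ) ≤ finrank k P' + (F.obj Q).dim := by exact_mod_cast hP'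
    linarith
  · have hN'i : (finrank k (N' i) : ℝ) ≤ K₂ * L :=
      calc (finrank k (N' i) : ℝ) ≤ (F.obj (M.submodule (N i))).dim := by exact_mod_cast hN'L i
        _ ≤ K₂ * (M.submodule (N i)).dim := (hdim _).2
        _ ≤ K₂ * L := by gcongr; exact_mod_cast hNL i
    exact le_max_of_le_right (by exact_mod_cast hN'i.trans (Nat.le_ceil _))

/-- an additive left-exact functor `F` with
`K₁ · dim X ≤ dim F(X) ≤ K₂ · dim X` maps hyperfinite families to hyperfinite families. -/
theorem stmt_6 {k A B : Type u} [Field k] [Ring A] [Algebra k A] [Ring B] [Algebra k B]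
    [FiniteDimensional k A] [FiniteDimensional k B]
    (F : FdFunctor k A B) (hle : F.LeftExact)
    (K₁ K₂ : ℝ) (hK₁ : 0 < K₁) (hK₂ : 0 < K₂)
    (hdim : ∀ X : FdModule k A,
      K₁ * (X.dim : ℝ) ≤ ((F.obj X).dim : ℝ) ∧ ((F.obj X).dim : ℝ) ≤ K₂ * (X.dim : ℝ))
    (𝓝 : Set (FdModule k A)) (h : Hyperfinite 𝓝) :
    Hyperfinite (F.obj '' 𝓝) :=
  stmt_6_general F hle K₁ K₂ hK₁ hK₂ hdim 𝓝 h
end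

section
/- Let k be a field and Q a finite acyclic quiver such that the category of finite-dimensional k-representations of Q is of amenable representation type. Let i ∈ Q₀ be a sink of Q (no arrow of Q starts at i), and let Q' = σ_i(Q) be the quiver obtained from Q by reversing all arrows starting or ending in i. Then the category of finite-dimensional k-representations of Q' is also of amenable representation type. -/
/-!
Hyperfiniteness for families of finite-dimensional representations of finite quivers,
following Elek.
-/

universe u

/-- A finite quiver: finite sets of vertices and arrows, with source and target maps. -/
structure FinQuiver : Type 1 where
  vertex : Type
  arrow : Type
  [vertexFintype : Fintype vertex]
  [arrowFintype : Fintype arrow]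
  src : arrow → vertex
  tgt : arrow → vertex

attribute [instance] FinQuiver.vertexFintype FinQuiver.arrowFintype

/-- A finite-dimensional `k`-representation of a finite quiver `Q`: a finite-dimensional
`k`-vector space at each vertex and a `k`-linear map along each arrow. -/
structure QuivRep (k : Type u) [Field k] (Q : FinQuiver) : Type (u+1) where
  space : Q.vertex → Type u
  [acg : ∀ i, AddCommGroup (space i)]
  [mod : ∀ i, Module k (space i)]
  [fd : ∀ i, FiniteDimensional k (space i)]
  map : ∀ a : Q.arrow, space (Q.src a) →ₗ[k] space (Q.tgt a)

attribute [instance] QuivRep.acg QuivRep.mod QuivRep.fd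

variable {k : Type u} [Field k] {Q : FinQuiver}

/-- The total dimension of a representation. -/
noncomputable def QuivRep.dim (M : QuivRep k Q) : ℕ :=
  ∑ i : Q.vertex, Module.finrank k (M.space i)

/-- A subrepresentation: a subspace at each vertex, compatible with all arrow maps. -/
structure SubRep (M : QuivRep k Q) : Type u where
  toFun : ∀ i : Q.vertex, Submodule k (M.space i)
  compat : ∀ (a : Q.arrow) (x : M.space (Q.src a)),
    x ∈ toFun (Q.src a) → M.map a x ∈ toFun (Q.tgt a)

/-- The total dimension of a subrepresentation. -/
noncomputable def SubRep.dim {M : QuivRep k Q} (P : SubRep M) : ℕ :=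
  ∑ i : Q.vertex, Module.finrank k (P.toFun i)

/-- A set `𝓜` of finite-dimensional representations of `Q` is *hyperfinite* if for every
`ε > 0` there is `L_ε > 0` such that every `M ∈ 𝓜` has a subrepresentation `P` with
`dim P ≥ (1 - ε) · dim M` which is isomorphic to a finite direct sum of representations of
dimension at most `L_ε`; equivalently, `P` is the internal direct sum (vertexwise) of
finitely many subrepresentations `N j`, each of dimension at most `L_ε`. -/
def QuivRepHyperfinite (𝓜 : Set (QuivRep k Q)) : Prop :=
  ∀ ε : ℝ, 0 < ε → ∃ L : ℕ, 0 < L ∧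
    ∀ M ∈ 𝓜, ∃ P : SubRep M,
      (1 - ε) * (M.dim : ℝ) ≤ (P.dim : ℝ) ∧
      ∃ (t : ℕ) (N : Fin t → SubRep M),
        (∀ j, (N j).dim ≤ L) ∧
        (∀ i : Q.vertex, iSupIndep fun j => (N j).toFun i) ∧
        (∀ i : Q.vertex, (⨆ j, (N j).toFun i) = P.toFun i)

/-- The path algebra `kQ` is of amenable representation type if the family of all
finite-dimensional representations of `Q` is hyperfinite. -/
def QuivRepAmenable (k : Type u) [Field k] (Q : FinQuiver) : Prop :=
  QuivRepHyperfinite (Set.univ : Set (QuivRep k Q))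

/-- A quiver is acyclic if it has no directed cycle. -/
def FinQuiver.Acyclic (Q : FinQuiver) : Prop :=
  ∀ (n : ℕ) (p : Fin (n + 1) → Q.arrow),
    (∀ m : Fin n, Q.tgt (p m.castSucc) = Q.src (p m.succ)) →
    Q.tgt (p (Fin.last n)) ≠ Q.src (p 0)

/-- The reflection `σ_i(Q)` of `Q` at a vertex `i`: all arrows starting or ending in `i`
are reversed. -/
noncomputable def FinQuiver.reflect (Q : FinQuiver) (i : Q.vertex) : FinQuiver where
  vertex := Q.vertex
  arrow := Q.arrow
  src := fun a => by classical exact if Q.src a = i ∨ Q.tgt a = i then Q.tgt a else Q.src a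
  tgt := fun a => by classical exact if Q.src a = i ∨ Q.tgt a = i then Q.src a else Q.tgt a

/-!
Since `i` is a source of `σ_i(Q)`, a representation `M'` of `σ_i(Q)` comes with a map
`φ : M'_i → ⊕_{a : j → i} M'_j`. Its reflection `S_i⁻ M'` (the cokernel of `φ` at `i`, `M'`
elsewhere) is a representation of `Q` of dimension at most `(1 + c) · dim M'`, where `c` is the
number of arrows into `i`. A subrepresentation `P` of `S_i⁻ M'` pulls back to the
subrepresentation of `M'` that agrees with `P` away from `i` and is `φ⁻¹(⊕ P_j)` at `i`; it misses
at most `(1 + c) · (dim S_i⁻ M' - dim P)` dimensions of `M'`. A decomposition of `P` into small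
pieces `N_l` pulls back as well: at `i`, a complement of `ker φ` carries lifts of the spaces
`(⊕ (N_l)_j) ∩ im φ`, which add up to `(⊕ P_j) ∩ im φ` because the images of the `⊕ (N_l)_j` in
the cokernel lie in the independent spaces `(N_l)_i`; the rest of `φ⁻¹(⊕ P_j)` is `ker φ`, which
is cut into lines. Hence hyperfiniteness of the reflections for `ε / (1 + c)²` gives
hyperfiniteness of the representations of `σ_i(Q)` for `ε`.
-/

section LinearAlgebra

open Module Submodule

variable {K U E F : Type*} [Field K] [AddCommGroup U] [Module K U] [AddCommGroup E] [Module K E]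
  [AddCommGroup F] [Module K F]

theorem iSupIndep_sumElim {α ι κ : Type*} [CompleteLattice α] [IsModularLattice α]
    {f : ι → α} {g : κ → α} (hf : iSupIndep f) (hg : iSupIndep g)
    (hfg : Disjoint (⨆ l, f l) (⨆ r, g r)) : iSupIndep (Sum.elim f g) := by
  rw [iSupIndep_def]
  rintro (l | r)
  · refine ((hf l).disjoint_sup_right_of_disjoint_sup_left
      (hfg.mono_left (sup_le (le_iSup f l) (iSup₂_le fun l' _ => le_iSup f l')))).mono_right ?_
    refine iSup₂_le ?_
    rintro (l' | r') h
    · exact le_sup_of_le_left (le_iSup₂_of_le l' (fun h' => h (h' ▸ rfl)) le_rfl)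
    · exact le_sup_of_le_right (le_iSup g r')
  · refine ((hg r).disjoint_sup_right_of_disjoint_sup_left
      (hfg.symm.mono_left (sup_le (le_iSup g r) (iSup₂_le fun r' _ => le_iSup g r')))).mono_right ?_
    refine iSup₂_le ?_
    rintro (l' | r') h
    · exact le_sup_of_le_right (le_iSup f l')
    · exact le_sup_of_le_left (le_iSup₂_of_le r' (fun h' => h (h' ▸ rfl)) le_rfl)

namespace Submodule

theorem sum_finrank_update {α : Type*} [Fintype α] [DecidableEq α] {W : α → Type*}
    [∀ a, AddCommGroup (W a)] [∀ a, Module K (W a)] (f : ∀ a, Submodule K (W a)) (b : α)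
    (V : Submodule K (W b)) :
    ∑ a, finrank K (Function.update f b V a) =
      finrank K V + ∑ a ∈ Finset.univ.erase b, finrank K (f a) := by
  rw [← Finset.add_sum_erase _ _ (Finset.mem_univ b), Function.update_self]
  congr 1
  exact Finset.sum_congr rfl fun a ha => by rw [Function.update_of_ne (Finset.ne_of_mem_erase ha)]

theorem iSupIndep_inf_comap {ι : Type*} {φ : U →ₗ[K] E} {V : Submodule K U}
    (hV : Disjoint V (LinearMap.ker φ)) {Y : ι → Submodule K E} (hY : iSupIndep Y) :
    iSupIndep fun l => V ⊓ (Y l).comap φ := by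
  rw [iSupIndep_iff_finsetSum_eq_zero_imp_eq_zero] at hY ⊢
  intro s v hv hsum l hl
  have hφ := hY s (φ ∘ v) (fun l hl => (hv l hl).2) (by simp [← map_sum, hsum])
  exact disjoint_def.mp hV _ (hv l hl).1 (hφ l hl)

theorem iSupIndep_pi_univ {ι κ : Type*} {W : κ → Type*} [∀ a, AddCommGroup (W a)]
    [∀ a, Module K (W a)] {p : ι → ∀ a, Submodule K (W a)}
    (hp : ∀ a, iSupIndep fun l => p l a) : iSupIndep fun l => pi Set.univ (p l) := by
  simp_rw [iSupIndep_iff_finsetSum_eq_zero_imp_eq_zero] at hp ⊢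
  intro s v hv hsum l hl
  funext a
  exact hp a s (fun l => v l a) (fun l hl => hv l hl a trivial)
    (by simpa using congrFun hsum a) l hl

theorem pi_univ_iSup {ι κ : Type*} [Finite κ] {W : κ → Type*} [∀ a, AddCommGroup (W a)]
    [∀ a, Module K (W a)] (p : ι → ∀ a, Submodule K (W a)) :
    pi Set.univ (fun a => ⨆ l, p l a) = ⨆ l, pi Set.univ (p l) := by
  classical
  simp_rw [← iSup_map_single, map_iSup]
  exact iSup_comm

theorem finrank_pi_univ_s8 {κ : Type*} [Fintype κ] {W : κ → Type*} [∀ a, AddCommGroup (W a)]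
    [∀ a, Module K (W a)] [∀ a, FiniteDimensional K (W a)] (p : ∀ a, Submodule K (W a)) :
    finrank K (pi Set.univ p) = ∑ a, finrank K (p a) := by
  let e : pi Set.univ p ≃ₗ[K] ∀ a, p a :=
    { Equiv.Set.univPi fun a => (p a : Set (W a)) with
      map_add' := fun _ _ => rfl
      map_smul' := fun _ _ => rfl }
  rw [e.finrank_eq, finrank_pi_fintype]

theorem iSup_inf_ker_le {ι : Type*} {π : E →ₗ[K] F} {Y : ι → Submodule K E}
    {D : ι → Submodule K F} (hD : iSupIndep D) (hYD : ∀ l, (Y l).map π ≤ D l) :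
    (⨆ l, Y l) ⊓ LinearMap.ker π ≤ ⨆ l, Y l ⊓ LinearMap.ker π := by
  rintro x ⟨hx, hπx⟩
  obtain ⟨y, hy, rfl⟩ := (mem_iSup_iff_exists_finsupp Y x).mp hx
  have hπy := (iSupIndep_iff_finsetSum_eq_zero_imp_eq_zero D).mp hD y.support (π ∘ y)
    (fun l _ => hYD l (mem_map_of_mem (hy l))) (by simpa [Finsupp.sum, map_sum] using hπx)
  exact sum_mem fun l hl => mem_iSup_of_mem l ⟨hy l, hπy l hl⟩

theorem map_inf_comap_of_codisjoint {φ : U →ₗ[K] E} {V : Submodule K U}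
    (hV : Codisjoint V (LinearMap.ker φ)) (Y : Submodule K E) :
    (V ⊓ Y.comap φ).map φ = Y ⊓ LinearMap.range φ := by
  refine le_antisymm (map_le_iff_le_comap.mpr fun u hu => ⟨hu.2, LinearMap.mem_range_self φ u⟩) ?_
  rintro _ ⟨hy, u, rfl⟩
  obtain ⟨v, hv, w, hw, rfl⟩ := mem_sup.mp (hV.eq_top ▸ mem_top : u ∈ V ⊔ LinearMap.ker φ)
  rw [LinearMap.mem_ker] at hw
  refine ⟨v, ⟨hv, ?_⟩, ?_⟩ <;> simp_all

theorem comap_iSup_of_codisjoint {ι : Type*} {φ : U →ₗ[K] E} {V : Submodule K U}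
    (hV : Codisjoint V (LinearMap.ker φ)) {Y : ι → Submodule K E}
    (hY : (⨆ l, Y l) ⊓ LinearMap.range φ ≤ ⨆ l, Y l ⊓ LinearMap.range φ) :
    (⨆ l, Y l).comap φ = (⨆ l, V ⊓ (Y l).comap φ) ⊔ LinearMap.ker φ := by
  refine le_antisymm ?_ (sup_le (iSup_le fun l => inf_le_right.trans (comap_mono (le_iSup Y l)))
    (LinearMap.ker_le_comap φ))
  calc (⨆ l, Y l).comap φ ≤ ((⨆ l, Y l) ⊓ LinearMap.range φ).comap φ :=
        fun u hu => ⟨hu, LinearMap.mem_range_self φ u⟩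
    _ ≤ (⨆ l, Y l ⊓ LinearMap.range φ).comap φ := comap_mono hY
    _ = ((⨆ l, V ⊓ (Y l).comap φ).map φ).comap φ := by
        simp_rw [map_iSup, map_inf_comap_of_codisjoint hV]
    _ = (⨆ l, V ⊓ (Y l).comap φ) ⊔ LinearMap.ker φ := comap_map_eq _ _

theorem finrank_inf_comap_le {φ : U →ₗ[K] E} {V : Submodule K U}
    (hV : Disjoint V (LinearMap.ker φ)) (Y : Submodule K E) [FiniteDimensional K Y] :
    finrank K (V ⊓ Y.comap φ : Submodule K U) ≤ finrank K Y := by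
  refine LinearMap.finrank_le_finrank_of_injective
    (f := (φ.domRestrict (V ⊓ Y.comap φ)).codRestrict Y fun u => u.2.2) fun u w h => ?_
  have huw : (u : U) - w ∈ V ⊓ LinearMap.ker φ := by
    refine ⟨sub_mem u.2.1 w.2.1, ?_⟩
    change φ ((u : U) - w) = 0
    rw [map_sub, sub_eq_zero]
    exact congrArg Subtype.val h
  rw [hV.eq_bot, mem_bot, sub_eq_zero] at huw
  exact Subtype.ext huw

theorem finrank_add_finrank_le_finrank_comap_add [FiniteDimensional K U] [FiniteDimensional K E]
    (φ : U →ₗ[K] E) (Y : Submodule K E) :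
    finrank K U + finrank K Y ≤ finrank K (Y.comap φ) + finrank K E := by
  have hker : LinearMap.ker (Y.mkQ ∘ₗ φ) = Y.comap φ := by
    rw [LinearMap.ker_comp, ker_mkQ]
  have := LinearMap.finrank_range_add_finrank_ker (Y.mkQ ∘ₗ φ)
  have := (LinearMap.range (Y.mkQ ∘ₗ φ)).finrank_le
  have := Y.finrank_quotient_add_finrank
  rw [hker] at *
  omega

theorem exists_iSupIndep_finrank_le_one [FiniteDimensional K E] (V : Submodule K E) :
    ∃ (m : ℕ) (ℓ : Fin m → Submodule K E),
      iSupIndep ℓ ∧ ⨆ r, ℓ r = V ∧ ∀ r, finrank K (ℓ r) ≤ 1 := by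
  let b := finBasis K V
  have hb : LinearIndependent K (V.subtype ∘ b) := b.linearIndependent.map' _ (ker_subtype V)
  refine ⟨_, fun r => K ∙ (b r : E), hb.iSupIndep_span_singleton, ?_,
    fun r => (finrank_span_singleton (hb.ne_zero r)).le⟩
  rw [← span_range_eq_iSup, show (Set.range fun r => (b r : E)) = V.subtype '' Set.range b from
    Set.range_comp _ _, span_image, b.span_eq, map_subtype_top]

end Submodule

end LinearAlgebra

namespace FinQuiver

variable (Q) in
def arrowsInto (i : Q.vertex) : Type := {a : Q.arrow // Q.tgt a = i}

noncomputable instance (i : Q.vertex) : Fintype (Q.arrowsInto i) := by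
  classical exact Subtype.fintype _

variable {i : Q.vertex} {a : Q.arrow}

theorem reflect_src_of_tgt_eq (h : Q.tgt a = i) : (Q.reflect i).src a = i := by
  simp [reflect, h]

theorem reflect_tgt_of_tgt_eq (h : Q.tgt a = i) : (Q.reflect i).tgt a = Q.src a := by
  simp [reflect, h]

theorem reflect_src_of_ne (hs : Q.src a ≠ i) (ht : Q.tgt a ≠ i) :
    (Q.reflect i).src a = Q.src a := by
  simp [reflect, hs, ht]

theorem reflect_tgt_of_ne (hs : Q.src a ≠ i) (ht : Q.tgt a ≠ i) :
    (Q.reflect i).tgt a = Q.tgt a := by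
  simp [reflect, hs, ht]

end FinQuiver

namespace QuivRep

open Module

variable (M : QuivRep k Q)

/-- `M.map a`, read as a map between vertices that are only propositionally its endpoints. -/
def mapAt (a : Q.arrow) {x y : Q.vertex} (hx : Q.src a = x) (hy : Q.tgt a = y) :
    M.space x →ₗ[k] M.space y :=
  hx ▸ hy ▸ M.map a

theorem mapAt_mem_iff (T : ∀ j, Submodule k (M.space j)) (a : Q.arrow) {x y : Q.vertex}
    (hx : Q.src a = x) (hy : Q.tgt a = y) :
    (∀ v ∈ T x, M.mapAt a hx hy v ∈ T y) ↔ ∀ v ∈ T (Q.src a), M.map a v ∈ T (Q.tgt a) := by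
  subst hx hy
  rfl

theorem finrank_le_dim (j : Q.vertex) : finrank k (M.space j) ≤ M.dim :=
  Finset.single_le_sum (f := fun j => finrank k (M.space j)) (fun _ _ => Nat.zero_le _)
    (Finset.mem_univ j)

end QuivRep

namespace SubRep

open Module

variable {M : QuivRep k Q}

theorem finrank_le_dim (P : SubRep M) (j : Q.vertex) : finrank k (P.toFun j) ≤ P.dim :=
  Finset.single_le_sum (f := fun j => finrank k (P.toFun j)) (fun _ _ => Nat.zero_le _)
    (Finset.mem_univ j)

theorem sum_finrank_add_dim_le (P : SubRep M) (s : Finset Q.vertex) :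
    ∑ j ∈ s, finrank k (M.space j) + P.dim ≤ ∑ j ∈ s, finrank k (P.toFun j) + M.dim := by
  classical
  have hM := Finset.sum_add_sum_compl s fun j => finrank k (M.space j)
  have hP := Finset.sum_add_sum_compl s fun j => finrank k (P.toFun j)
  have hle : ∑ j ∈ sᶜ, finrank k (P.toFun j) ≤ ∑ j ∈ sᶜ, finrank k (M.space j) :=
    Finset.sum_le_sum fun j _ => Submodule.finrank_le _
  simp only [QuivRep.dim, SubRep.dim] at *
  omega

def IsDecomposition {ι : Type*} (L : ℕ) (N : ι → SubRep M) (P : SubRep M) : Prop :=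
  (∀ l, (N l).dim ≤ L) ∧ (∀ j, iSupIndep fun l => (N l).toFun j) ∧
    ∀ j, ⨆ l, (N l).toFun j = P.toFun j

theorem IsDecomposition.exists_fin {ι : Type*} [Fintype ι] {L : ℕ} {N : ι → SubRep M}
    {P : SubRep M} (h : P.IsDecomposition L N) :
    ∃ (t : ℕ) (N' : Fin t → SubRep M), P.IsDecomposition L N' := by
  let e := Fintype.equivFin ι
  refine ⟨_, N ∘ e.symm, fun l => h.1 _, fun j => (h.2.1 j).comp e.symm.injective, fun j => ?_⟩
  rw [← h.2.2 j]
  exact e.symm.iSup_comp (g := fun l => (N l).toFun j)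

end SubRep

namespace ReflectAtSink

open Module Submodule FinQuiver
open scoped Classical

variable {i : Q.vertex} (hsink : ∀ a : Q.arrow, Q.src a ≠ i) (M' : QuivRep k (Q.reflect i))

/-- `M'.space`, indexed by the vertices of `Q`. Instance search and rewriting do not unfold
`FinQuiver.reflect`, so for `j : Q.vertex` the term `M'.space j` is well-typed only up to
unfolding; working with this copy avoids that. -/
def vertexSpace (j : Q.vertex) : Type u := M'.space j

instance (j : Q.vertex) : AddCommGroup (vertexSpace M' j) := M'.acg j

instance (j : Q.vertex) : Module k (vertexSpace M' j) := M'.mod j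

instance (j : Q.vertex) : FiniteDimensional k (vertexSpace M' j) := M'.fd j

abbrev OutSpace : Type u := ∀ a : Q.arrowsInto i, vertexSpace M' (Q.src a.1)

noncomputable def outMap : vertexSpace M' i →ₗ[k] OutSpace M' :=
  LinearMap.pi fun a => M'.mapAt a.1 (reflect_src_of_tgt_eq a.2) (reflect_tgt_of_tgt_eq a.2)

abbrev Coker : Type u := OutSpace M' ⧸ LinearMap.range (outMap M')

/-- The vertex spaces of the reflection, realised uniformly inside `M'_j × Coker M'`:
the cokernel at `i`, and `M'_j` at every other vertex. -/
noncomputable def carrier (j : Q.vertex) : Submodule k (vertexSpace M' j × Coker M') :=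
  if j = i then (⊥ : Submodule k (vertexSpace M' j)).prod ⊤
  else (⊤ : Submodule k (vertexSpace M' j)).prod ⊥

theorem carrier_self : carrier M' i = (⊥ : Submodule k (vertexSpace M' i)).prod ⊤ := if_pos rfl

theorem carrier_of_ne {j : Q.vertex} (hj : j ≠ i) :
    carrier M' j = (⊤ : Submodule k (vertexSpace M' j)).prod ⊥ := if_neg hj

noncomputable def unreflectedMap (a : Q.arrow) (ha : Q.tgt a ≠ i) :
    vertexSpace M' (Q.src a) →ₗ[k] vertexSpace M' (Q.tgt a) :=
  M'.mapAt a (reflect_src_of_ne (hsink a) ha) (reflect_tgt_of_ne (hsink a) ha)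

noncomputable def repMap (a : Q.arrow) :
    vertexSpace M' (Q.src a) × Coker M' →ₗ[k] vertexSpace M' (Q.tgt a) × Coker M' :=
  if ha : Q.tgt a = i then
    LinearMap.inr k _ _ ∘ₗ (LinearMap.range (outMap M')).mkQ ∘ₗ
      LinearMap.single k (fun a : Q.arrowsInto i => vertexSpace M' (Q.src a.1)) ⟨a, ha⟩ ∘ₗ
        LinearMap.fst k _ _
  else LinearMap.inl k _ _ ∘ₗ unreflectedMap hsink M' a ha ∘ₗ LinearMap.fst k _ _

theorem repMap_mem (a : Q.arrow) (x : vertexSpace M' (Q.src a) × Coker M') :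
    repMap hsink M' a x ∈ carrier M' (Q.tgt a) := by
  by_cases ha : Q.tgt a = i
  · rw [carrier, if_pos ha]
    simp [repMap, ha]
  · rw [carrier, if_neg ha]
    simp [repMap, ha]

/-- The Bernstein–Gelfand–Ponomarev reflection `S_i⁻ M'`. -/
noncomputable abbrev rep : QuivRep k Q where
  space j := carrier M' j
  acg j := (carrier M' j).addCommGroup
  mod j := (carrier M' j).module
  fd _ := inferInstance
  map a := (repMap hsink M' a).restrict fun x _ => repMap_mem hsink M' a x

noncomputable def carrierFst (j : Q.vertex) : carrier M' j →ₗ[k] vertexSpace M' j :=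
  LinearMap.fst k _ _ ∘ₗ (carrier M' j).subtype

noncomputable def carrierSnd (j : Q.vertex) : carrier M' j →ₗ[k] Coker M' :=
  LinearMap.snd k _ _ ∘ₗ (carrier M' j).subtype

theorem carrierFst_injective {j : Q.vertex} (hj : j ≠ i) :
    Function.Injective (carrierFst M' j) := by
  intro v w h
  have hv : (v : vertexSpace M' j × Coker M') ∈ (⊤ : Submodule k (vertexSpace M' j)).prod ⊥ :=
    carrier_of_ne M' hj ▸ v.2
  have hw : (w : vertexSpace M' j × Coker M') ∈ (⊤ : Submodule k (vertexSpace M' j)).prod ⊥ :=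
    carrier_of_ne M' hj ▸ w.2
  exact Subtype.ext (Prod.ext h ((mem_bot k).mp hv.2 |>.trans ((mem_bot k).mp hw.2).symm))

theorem carrierSnd_injective : Function.Injective (carrierSnd M' i) := by
  intro v w h
  have hv : (v : vertexSpace M' i × Coker M') ∈ (⊥ : Submodule k (vertexSpace M' i)).prod ⊤ :=
    carrier_self M' ▸ v.2
  have hw : (w : vertexSpace M' i × Coker M') ∈ (⊥ : Submodule k (vertexSpace M' i)).prod ⊤ :=
    carrier_self M' ▸ w.2
  exact Subtype.ext (Prod.ext ((mem_bot k).mp hv.1 |>.trans ((mem_bot k).mp hw.1).symm) h)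

theorem finrank_rep_space_of_ne {j : Q.vertex} (hj : j ≠ i) :
    finrank k ((rep hsink M').space j) = finrank k (vertexSpace M' j) := by
  refine (LinearEquiv.ofBijective (carrierFst M' j)
    ⟨carrierFst_injective M' hj, fun x => ⟨⟨(x, 0), ?_⟩, rfl⟩⟩).finrank_eq
  rw [carrier_of_ne M' hj]
  exact ⟨trivial, rfl⟩

theorem finrank_rep_space_self_le :
    finrank k ((rep hsink M').space i) ≤ finrank k (OutSpace M') :=
  (LinearMap.finrank_le_finrank_of_injective (carrierSnd_injective M')).trans
    (Submodule.finrank_quotient_le _)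

theorem carrierFst_rep_map (a : Q.arrow) (ha : Q.tgt a ≠ i) (v : carrier M' (Q.src a)) :
    carrierFst M' (Q.tgt a) ((rep hsink M').map a v) =
      unreflectedMap hsink M' a ha (carrierFst M' (Q.src a) v) := by
  simp only [rep, repMap, dif_neg ha]
  rfl

theorem carrierSnd_rep_map (a : Q.arrowsInto i) (v : carrier M' (Q.src a.1)) :
    carrierSnd M' (Q.tgt a.1) ((rep hsink M').map a.1 v) =
      (LinearMap.range (outMap M')).mkQ (Pi.single a (carrierFst M' (Q.src a.1) v)) := by
  simp only [rep, repMap, dif_pos a.2]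
  rfl

theorem compat_update (f : ∀ j : Q.vertex, Submodule k (vertexSpace M' j))
    (V : Submodule k (vertexSpace M' i))
    (hV : V ≤ (pi Set.univ fun a : Q.arrowsInto i => f (Q.src a.1)).comap (outMap M'))
    (hf : ∀ a (ha : Q.tgt a ≠ i), ∀ v ∈ f (Q.src a), unreflectedMap hsink M' a ha v ∈ f (Q.tgt a))
    (a : (Q.reflect i).arrow) (v : M'.space ((Q.reflect i).src a))
    (hv : v ∈ Function.update f i V ((Q.reflect i).src a)) :
    M'.map a v ∈ Function.update f i V ((Q.reflect i).tgt a) := by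
  by_cases ha : Q.tgt a = i
  · refine (M'.mapAt_mem_iff (Function.update f i V) a (reflect_src_of_tgt_eq ha)
      (reflect_tgt_of_tgt_eq ha)).mp (fun w hw => ?_) v hv
    -- `hw` and the goal are indexed by `(Q.reflect i).vertex`, which `rw` does not unfold
    erw [Function.update_self] at hw
    erw [Function.update_of_ne (hsink a)]
    exact hV hw ⟨a, ha⟩ trivial
  · refine (M'.mapAt_mem_iff (Function.update f i V) a (reflect_src_of_ne (hsink a) ha)
      (reflect_tgt_of_ne (hsink a) ha)).mp (fun w hw => ?_) v hv
    erw [Function.update_of_ne (hsink a)] at hw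
    erw [Function.update_of_ne ha]
    exact hf a ha w hw

variable {hsink M'}

noncomputable def fstSub (P : SubRep (rep hsink M')) (j : Q.vertex) :
    Submodule k (vertexSpace M' j) :=
  (P.toFun j).map (carrierFst M' j)

noncomputable def box (P : SubRep (rep hsink M')) : Submodule k (OutSpace M') :=
  pi Set.univ fun a : Q.arrowsInto i => fstSub P (Q.src a.1)

theorem unreflectedMap_mem_fstSub (P : SubRep (rep hsink M')) (a : Q.arrow) (ha : Q.tgt a ≠ i)
    {v : vertexSpace M' (Q.src a)} (hv : v ∈ fstSub P (Q.src a)) :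
    unreflectedMap hsink M' a ha v ∈ fstSub P (Q.tgt a) := by
  obtain ⟨w, hw, rfl⟩ := hv
  exact ⟨_, P.compat a w hw, carrierFst_rep_map hsink M' a ha w⟩

theorem mkQ_single_mem (P : SubRep (rep hsink M')) (a : Q.arrowsInto i)
    {v : vertexSpace M' (Q.src a.1)} (hv : v ∈ fstSub P (Q.src a.1)) :
    (LinearMap.range (outMap M')).mkQ (Pi.single a v) ∈ (P.toFun i).map (carrierSnd M' i) := by
  obtain ⟨w, hw, rfl⟩ := hv
  obtain ⟨a, rfl⟩ := a
  exact ⟨_, P.compat a w hw, carrierSnd_rep_map hsink M' ⟨a, rfl⟩ w⟩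

theorem map_mkQ_box_le (P : SubRep (rep hsink M')) :
    (box P).map (LinearMap.range (outMap M')).mkQ ≤ (P.toFun i).map (carrierSnd M' i) := by
  rw [map_le_iff_le_comap]
  intro x hx
  rw [← Finset.univ_sum_single x, mem_comap, map_sum]
  exact sum_mem fun a _ => mkQ_single_mem P a (hx a trivial)

variable (hsink) in
noncomputable def lift (P : SubRep (rep hsink M')) (V : Submodule k (vertexSpace M' i))
    (hV : V ≤ (box P).comap (outMap M')) : SubRep M' where
  toFun := Function.update (fstSub P) i V
  compat := compat_update hsink M' _ V hV fun a ha _ => unreflectedMap_mem_fstSub P a ha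

variable (hsink) in
noncomputable def ofKer (V : Submodule k (vertexSpace M' i))
    (hV : V ≤ LinearMap.ker (outMap M')) : SubRep M' where
  toFun := Function.update (fun j : Q.vertex => (⊥ : Submodule k (vertexSpace M' j))) i V
  compat := compat_update hsink M' _ V (by simpa using hV) fun a ha v hv => by
    rw [mem_bot] at hv ⊢
    rw [hv, map_zero]

noncomputable def transfer (P : SubRep (rep hsink M')) : SubRep M' :=
  lift hsink P _ le_rfl

/-- `T.toFun`, indexed by the vertices of `Q` (see `vertexSpace`). -/
def subspace (T : SubRep M') (j : Q.vertex) : Submodule k (vertexSpace M' j) := T.toFun j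

theorem subspace_lift_self (P : SubRep (rep hsink M')) (V : Submodule k (vertexSpace M' i))
    (hV : V ≤ (box P).comap (outMap M')) : subspace (lift hsink P V hV) i = V :=
  show Function.update (fstSub P) i V i = V from Function.update_self ..

theorem subspace_lift_of_ne (P : SubRep (rep hsink M')) (V : Submodule k (vertexSpace M' i))
    (hV : V ≤ (box P).comap (outMap M')) {j : Q.vertex} (hj : j ≠ i) :
    subspace (lift hsink P V hV) j = fstSub P j :=
  Function.update_of_ne hj ..

variable (hsink) in
theorem subspace_ofKer_self (V : Submodule k (vertexSpace M' i))
    (hV : V ≤ LinearMap.ker (outMap M')) : subspace (ofKer hsink V hV) i = V :=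
  show Function.update (fun j : Q.vertex => (⊥ : Submodule k (vertexSpace M' j))) i V i = V from
    Function.update_self ..

variable (hsink) in
theorem subspace_ofKer_of_ne (V : Submodule k (vertexSpace M' i))
    (hV : V ≤ LinearMap.ker (outMap M')) {j : Q.vertex} (hj : j ≠ i) :
    subspace (ofKer hsink V hV) j = ⊥ :=
  show Function.update (fun j : Q.vertex => (⊥ : Submodule k (vertexSpace M' j))) i V j = ⊥ from
    Function.update_of_ne hj ..

theorem finrank_fstSub (P : SubRep (rep hsink M')) {j : Q.vertex} (hj : j ≠ i) :
    finrank k (fstSub P j) = finrank k (P.toFun j) :=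
  (equivMapOfInjective (carrierFst M' j) (carrierFst_injective M' hj) (P.toFun j)).finrank_eq.symm

theorem finrank_box (P : SubRep (rep hsink M')) :
    finrank k (box P) = ∑ a : Q.arrowsInto i, finrank k (P.toFun (Q.src a.1)) := by
  rw [box, finrank_pi_univ_s8]
  exact Finset.sum_congr rfl fun a _ => finrank_fstSub P (hsink a.1)

theorem dim_lift (P : SubRep (rep hsink M')) (V : Submodule k (vertexSpace M' i))
    (hV : V ≤ (box P).comap (outMap M')) :
    (lift hsink P V hV).dim = finrank k V + ∑ j ∈ Finset.univ.erase i, finrank k (P.toFun j) := by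
  change ∑ j, finrank k (Function.update (fstSub P) i V j) = _
  rw [sum_finrank_update]
  congr 1
  exact Finset.sum_congr rfl fun j hj => finrank_fstSub P (Finset.ne_of_mem_erase hj)

variable (hsink) in
theorem dim_ofKer (V : Submodule k (vertexSpace M' i)) (hV : V ≤ LinearMap.ker (outMap M')) :
    (ofKer hsink V hV).dim = finrank k V := by
  change ∑ j, finrank k
    (Function.update (fun j : Q.vertex => (⊥ : Submodule k (vertexSpace M' j))) i V j) = _
  simp [sum_finrank_update]

variable (hsink M') in
theorem dim_rep_le : (rep hsink M').dim ≤ (1 + Fintype.card (Q.arrowsInto i)) * M'.dim := by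
  have hsplit : (rep hsink M').dim = finrank k ((rep hsink M').space i) +
      ∑ j ∈ Finset.univ.erase i, finrank k (vertexSpace M' j) := by
    rw [QuivRep.dim, ← Finset.add_sum_erase _ _ (Finset.mem_univ i)]
    congr 1
    exact Finset.sum_congr rfl fun j hj =>
      finrank_rep_space_of_ne hsink M' (Finset.ne_of_mem_erase hj)
  have hout : finrank k (OutSpace M') ≤ Fintype.card (Q.arrowsInto i) * M'.dim := by
    rw [finrank_pi_fintype]
    calc ∑ a : Q.arrowsInto i, finrank k (vertexSpace M' (Q.src a.1))
        ≤ ∑ _a : Q.arrowsInto i, M'.dim := Finset.sum_le_sum fun a _ => M'.finrank_le_dim _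
      _ = Fintype.card (Q.arrowsInto i) * M'.dim := by simp
  have hrest : ∑ j ∈ Finset.univ.erase i, finrank k (vertexSpace M' j) ≤ M'.dim :=
    Finset.sum_le_sum_of_subset (Finset.erase_subset _ _)
  have := finrank_rep_space_self_le hsink M'
  rw [add_mul, one_mul]
  omega

theorem dim_add_mul_dim_le (P : SubRep (rep hsink M')) :
    M'.dim + (1 + Fintype.card (Q.arrowsInto i)) * P.dim ≤
      (transfer P).dim + (1 + Fintype.card (Q.arrowsInto i)) * (rep hsink M').dim := by
  set c := Fintype.card (Q.arrowsInto i)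
  have hM : M'.dim = finrank k (vertexSpace M' i) +
      ∑ j ∈ Finset.univ.erase i, finrank k (vertexSpace M' j) :=
    (Finset.add_sum_erase _ _ (Finset.mem_univ i)).symm
  have hT := dim_lift P _ (le_refl ((box P).comap (outMap M')))
  have hcomap := finrank_add_finrank_le_finrank_comap_add (outMap M') (box P)
  have hout : finrank k (OutSpace M') =
      ∑ a : Q.arrowsInto i, finrank k ((rep hsink M').space (Q.src a.1)) := by
    rw [finrank_pi_fintype]
    exact Finset.sum_congr rfl fun a _ => (finrank_rep_space_of_ne hsink M' (hsink a.1)).symm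
  have hsrc : ∑ a : Q.arrowsInto i, finrank k ((rep hsink M').space (Q.src a.1)) + c * P.dim ≤
      ∑ a : Q.arrowsInto i, finrank k (P.toFun (Q.src a.1)) + c * (rep hsink M').dim := by
    have := Finset.sum_le_sum (s := Finset.univ) fun (a : Q.arrowsInto i) _ => by
      simpa using P.sum_finrank_add_dim_le {Q.src a.1}
    simpa [Finset.sum_add_distrib] using this
  have hrest := P.sum_finrank_add_dim_le (Finset.univ.erase i)
  have hrest' : ∑ j ∈ Finset.univ.erase i, finrank k ((rep hsink M').space j) =
      ∑ j ∈ Finset.univ.erase i, finrank k (vertexSpace M' j) :=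
    Finset.sum_congr rfl fun j hj => finrank_rep_space_of_ne hsink M' (Finset.ne_of_mem_erase hj)
  rw [finrank_box] at hcomap
  unfold transfer
  rw [add_mul, add_mul, one_mul, one_mul]
  omega

theorem dim_lift_inf_comap_le {V : Submodule k (vertexSpace M' i)}
    (hV : Disjoint V (LinearMap.ker (outMap M'))) {L : ℕ} (P : SubRep (rep hsink M'))
    (hP : P.dim ≤ L) :
    (lift hsink P (V ⊓ (box P).comap (outMap M')) inf_le_right).dim ≤
      (1 + Fintype.card (Q.arrowsInto i)) * L := by
  have hbox : finrank k (box P) ≤ Fintype.card (Q.arrowsInto i) * L := by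
    rw [finrank_box]
    calc ∑ a : Q.arrowsInto i, finrank k (P.toFun (Q.src a.1))
        ≤ ∑ _a : Q.arrowsInto i, L := Finset.sum_le_sum fun a _ => (P.finrank_le_dim _).trans hP
      _ = Fintype.card (Q.arrowsInto i) * L := by simp
  have hrest : ∑ j ∈ Finset.univ.erase i, finrank k (P.toFun j) ≤ L :=
    (Finset.sum_le_sum_of_subset (Finset.erase_subset _ _)).trans hP
  have := finrank_inf_comap_le hV (box P)
  rw [dim_lift, add_mul, one_mul]
  omega

section Decomposition

variable {ι : Type*} {N : ι → SubRep (rep hsink M')} {P : SubRep (rep hsink M')}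

theorem iSup_fstSub (hNP : ∀ j, ⨆ l, (N l).toFun j = P.toFun j) (j : Q.vertex) :
    ⨆ l, fstSub (N l) j = fstSub P j := by
  rw [fstSub, ← hNP j, Submodule.map_iSup]
  rfl

theorem iSupIndep_fstSub (hN : ∀ j, iSupIndep fun l => (N l).toFun j) {j : Q.vertex}
    (hj : j ≠ i) : iSupIndep fun l => fstSub (N l) j :=
  LinearMap.iSupIndep_map _ (carrierFst_injective M' hj) (hN j)

theorem iSup_box (hNP : ∀ j, ⨆ l, (N l).toFun j = P.toFun j) : ⨆ l, box (N l) = box P := by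
  simp_rw [box, ← pi_univ_iSup, iSup_fstSub hNP]

theorem iSupIndep_box (hN : ∀ j, iSupIndep fun l => (N l).toFun j) :
    iSupIndep fun l => box (N l) :=
  iSupIndep_pi_univ fun a => iSupIndep_fstSub hN (hsink a.1)

theorem iSup_box_inf_range_le (hN : ∀ j, iSupIndep fun l => (N l).toFun j) :
    (⨆ l, box (N l)) ⊓ LinearMap.range (outMap M') ≤
      ⨆ l, box (N l) ⊓ LinearMap.range (outMap M') := by
  simpa only [ker_mkQ] using iSup_inf_ker_le
    (LinearMap.iSupIndep_map _ (carrierSnd_injective M') (hN i)) fun l => map_mkQ_box_le (N l)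

variable (N) in
noncomputable def pieces (V : Submodule k (vertexSpace M' i)) {m : ℕ}
    (ℓ : Fin m → Submodule k (vertexSpace M' i)) (hℓ : ⨆ r, ℓ r = LinearMap.ker (outMap M')) :
    ι ⊕ Fin m → SubRep M' :=
  Sum.elim (fun l => lift hsink (N l) (V ⊓ (box (N l)).comap (outMap M')) inf_le_right)
    fun r => ofKer hsink (ℓ r) (hℓ ▸ le_iSup ℓ r)

variable {V : Submodule k (vertexSpace M' i)} {m : ℕ} {ℓ : Fin m → Submodule k (vertexSpace M' i)}
  (hℓ : ⨆ r, ℓ r = LinearMap.ker (outMap M'))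

theorem subspace_pieces_self :
    (fun s => subspace (pieces N V ℓ hℓ s) i) =
      Sum.elim (fun l => V ⊓ (box (N l)).comap (outMap M')) ℓ := by
  funext s
  rcases s with l | r
  · exact subspace_lift_self _ _ inf_le_right
  · exact subspace_ofKer_self hsink _ (hℓ ▸ le_iSup ℓ r)

theorem subspace_pieces_of_ne {j : Q.vertex} (hj : j ≠ i) :
    (fun s => subspace (pieces N V ℓ hℓ s) j) = Sum.elim (fun l => fstSub (N l) j) fun _ => ⊥ := by
  funext s
  rcases s with l | r
  · exact subspace_lift_of_ne _ _ inf_le_right hj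
  · exact subspace_ofKer_of_ne hsink _ (hℓ ▸ le_iSup ℓ r) hj

theorem isDecomposition_pieces {L : ℕ} (h : P.IsDecomposition L N)
    (hV : IsCompl (LinearMap.ker (outMap M')) V) (hℓindep : iSupIndep ℓ)
    (hℓdim : ∀ r, finrank k (ℓ r) ≤ 1) :
    (transfer P).IsDecomposition ((1 + Fintype.card (Q.arrowsInto i)) * L + 1)
      (pieces N V ℓ hℓ) := by
  obtain ⟨hNdim, hNindep, hNsup⟩ := h
  have hindep (j : Q.vertex) : iSupIndep fun s => subspace (pieces N V ℓ hℓ s) j := by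
    obtain rfl | hj := eq_or_ne j i
    · rw [subspace_pieces_self]
      exact iSupIndep_sumElim (iSupIndep_inf_comap hV.symm.disjoint (iSupIndep_box hNindep))
        hℓindep (hℓ ▸ hV.symm.disjoint.mono_left (iSup_le fun _ => inf_le_left))
    · rw [subspace_pieces_of_ne hℓ hj]
      exact iSupIndep_sumElim (iSupIndep_fstSub hNindep hj)
        (iSupIndep_def.mpr fun _ => disjoint_bot_left) (by simp)
  have hsup (j : Q.vertex) : ⨆ s, subspace (pieces N V ℓ hℓ s) j = subspace (transfer P) j := by
    obtain rfl | hj := eq_or_ne j i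
    · rw [subspace_pieces_self, iSup_sum]
      simp only [Sum.elim_inl, Sum.elim_inr]
      rw [hℓ, ← comap_iSup_of_codisjoint hV.symm.codisjoint (iSup_box_inf_range_le hNindep),
        iSup_box hNsup]
      exact (subspace_lift_self _ _ le_rfl).symm
    · rw [subspace_pieces_of_ne hℓ hj, iSup_sum]
      simp only [Sum.elim_inl, Sum.elim_inr, iSup_bot, sup_bot_eq, iSup_fstSub hNsup]
      exact (subspace_lift_of_ne _ _ le_rfl hj).symm
  refine ⟨?_, hindep, hsup⟩
  rintro (l | r)
  · exact (dim_lift_inf_comap_le hV.symm.disjoint (N l) (hNdim l)).trans (Nat.le_succ _)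
  · exact ((dim_ofKer hsink _ (hℓ ▸ le_iSup ℓ r)).trans_le (hℓdim r)).trans (Nat.le_add_left _ _)

theorem exists_isDecomposition_transfer {L : ℕ} (h : P.IsDecomposition L N) :
    ∃ (m : ℕ) (N' : ι ⊕ Fin m → SubRep M'),
      (transfer P).IsDecomposition ((1 + Fintype.card (Q.arrowsInto i)) * L + 1) N' := by
  obtain ⟨m, ℓ, hℓindep, hℓ, hℓdim⟩ := exists_iSupIndep_finrank_le_one (LinearMap.ker (outMap M'))
  obtain ⟨V, hV⟩ := (LinearMap.ker (outMap M')).exists_isCompl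
  exact ⟨m, _, isDecomposition_pieces hℓ h hV hℓindep hℓdim⟩

end Decomposition

end ReflectAtSink

open ReflectAtSink in
theorem stmt_8_general {k : Type u} [Field k] (Q : FinQuiver)
    (i : Q.vertex) (hsink : ∀ a : Q.arrow, Q.src a ≠ i)
    (h : QuivRepAmenable k Q) :
    QuivRepAmenable k (Q.reflect i) := by
  intro ε hε
  set c := Fintype.card (Q.arrowsInto i)
  obtain ⟨L, -, hL⟩ := h (ε / (1 + c) ^ 2) (by positivity)
  refine ⟨(1 + c) * L + 1, Nat.succ_pos _, fun M' _ => ?_⟩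
  obtain ⟨P, hP, t, N, hN⟩ := hL (rep hsink M') trivial
  obtain ⟨m, N', hN'⟩ := exists_isDecomposition_transfer hN
  refine ⟨transfer P, ?_, hN'.exists_fin⟩
  have htransfer : (M'.dim : ℝ) + (1 + c) * P.dim ≤
      (transfer P).dim + (1 + c) * (rep hsink M').dim := by
    exact_mod_cast dim_add_mul_dim_le P
  have hrep : ((rep hsink M').dim : ℝ) ≤ (1 + c) * M'.dim := by
    exact_mod_cast dim_rep_le hsink M'
  have hloss : (1 + c) * (((rep hsink M').dim : ℝ) - P.dim) ≤ ε * M'.dim :=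
    calc (1 + c) * (((rep hsink M').dim : ℝ) - P.dim)
        ≤ (1 + c) * (ε / (1 + c) ^ 2 * ((1 + c) * M'.dim)) := by
          have := mul_le_mul_of_nonneg_left hrep (by positivity : 0 ≤ ε / (1 + c) ^ 2)
          gcongr
          linarith
      _ = ε * M'.dim := by field_simp
  linarith

/-- if `Q` is a finite acyclic quiver of amenable representation type over a
field `k` and `i` is a sink of `Q`, then the reflected quiver `σ_i(Q)` is also of
amenable representation type over `k`. -/
theorem stmt_8 {k : Type u} [Field k] (Q : FinQuiver) (hacyc : Q.Acyclic)
    (i : Q.vertex) (hsink : ∀ a : Q.arrow, Q.src a ≠ i)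
    (h : QuivRepAmenable k Q) :
    QuivRepAmenable k (Q.reflect i) :=
  stmt_8_general Q i hsink h
end

section
/- Let k be any field and Q the 2-Kronecker quiver with two vertices 1, 2 and two arrows a, b : 1 → 2. For i ≥ 0 let P_i denote the representation with P_i(1) = k^i, P_i(2) = k^{i+1}, where a acts as the matrix [id; 0] (the i×i identity on top of a zero row block) and b acts as [0; id] (a zero row block on top of the i×i identity). Then the family {P_i : i ≥ 0} of representations of Q is hyperfinite. -/
/-!
Hyperfiniteness for families of finite-dimensional representations of finite quivers,
following Elek.
-/

universe u

variable {k : Type u} [Field k] {Q : FinQuiver}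

/-- The 2-Kronecker quiver: vertices `false = 1` and `true = 2`, arrows `false = a` and
`true = b`, both from vertex `1` to vertex `2`. -/
def Kronecker : FinQuiver where
  vertex := Bool
  arrow := Bool
  src := fun _ => false
  tgt := fun _ => true

/-- The representation of the 2-Kronecker quiver with spaces `k^n` (at vertex `1`) and
`k^m` (at vertex `2`), where the arrow `a` acts via the matrix `A` and the arrow `b` acts
via the matrix `B`. -/
noncomputable def kronRep (k : Type u) [Field k] (n m : ℕ)
    (A B : Matrix (Fin m) (Fin n) k) : QuivRep k Kronecker where
  space := fun v => Bool.rec (Fin n → k) (Fin m → k) v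
  acg := fun v => by cases v <;> infer_instance
  mod := fun v => by cases v <;> infer_instance
  fd := fun v => by cases v <;> infer_instance
  map := fun a => Matrix.toLin' (cond a B A)

/-- The matrix `[id; 0]` : the `i × i` identity on top of a zero row block. -/
def idZeroMat (k : Type u) [Field k] (i : ℕ) : Matrix (Fin (i + 1)) (Fin i) k :=
  Matrix.of fun r c => if (r : ℕ) = (c : ℕ) then 1 else 0

/-- The matrix `[0; id]` : a zero row block on top of the `i × i` identity. -/
def zeroIdMat (k : Type u) [Field k] (i : ℕ) : Matrix (Fin (i + 1)) (Fin i) k :=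
  Matrix.of fun r c => if (r : ℕ) = (c : ℕ) + 1 then 1 else 0

/-- The indecomposable preprojective representation `P_i` of the 2-Kronecker quiver:
`P_i(1) = k^i`, `P_i(2) = k^{i+1}`, `a` acts as `[id; 0]` and `b` acts as `[0; id]`. -/
noncomputable def kronP (k : Type u) [Field k] (i : ℕ) : QuivRep k Kronecker :=
  kronRep k i (i + 1) (idZeroMat k i) (zeroIdMat k i)

/-!
Fix a block length `m > 1/ε` and discard the basis vectors `e_c` of `P_i(1)` with `m ∣ c + 1`.
The remaining basis vectors fall into blocks of consecutive indices: block `j` consists of the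
`e_c` with `c / m = j` and the `f_r` of `P_i(2)` with `r / m = j`. Since `a e_c = f_c` and
`b e_c = f_{c+1}` stay inside the block of `e_c`, each block spans a subrepresentation (a copy of
`P_{m-1}` or smaller) of dimension at most `2m`, and these subrepresentations are independent.
At most `i / m ≤ ε i` basis vectors were discarded.
-/

open Function Submodule Finset Matrix

namespace Module.Basis

variable {ι J R V : Type*} [Ring R] [AddCommGroup V] [Module R V]

theorem iSupIndep_span_image (b : Basis ι R V) {S : J → Set ι} (hS : Pairwise (Disjoint on S)) :
    iSupIndep fun j => span R (b '' S j) := by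
  intro j
  simp only [← span_iUnion, ← Set.image_iUnion]
  exact b.linearIndependent.disjoint_span_image
    (Set.disjoint_iUnion₂_right.2 fun l hl => hS (Ne.symm hl))

theorem finrank_span_image [Nontrivial R] [StrongRankCondition R] (b : Basis ι R V)
    (S : Finset ι) : finrank R (span R (b '' S)) = #S := by
  have := finrank_span_eq_card
    (b.linearIndependent.comp _ (Subtype.val_injective (p := (· ∈ S))))
  rwa [Set.range_comp, Subtype.range_coe_subtype, Finset.setOfPred_mem, Fintype.card_coe] at this

end Module.Basis

section CoordSpan

variable (k) {ι : Type*} [Fintype ι]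

def coordSpan (S : Set ι) : Submodule k (ι → k) := span k (Pi.basisFun k ι '' S)

variable {k}

theorem mem_coordSpan {S : Set ι} {x : ι → k} :
    x ∈ coordSpan k S ↔ ∀ i ∉ S, x i = 0 := by
  rw [coordSpan, Module.Basis.mem_span_image]
  simp [Set.subset_def, not_imp_comm]

theorem Matrix.mulVec_mem_coordSpan {κ : Type*} [Fintype κ]
    {A : Matrix κ ι k} {S : Set ι} {T : Set κ} (hA : ∀ c ∈ S, ∀ r ∉ T, A r c = 0)
    {x : ι → k} (hx : x ∈ coordSpan k S) : A *ᵥ x ∈ coordSpan k T := by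
  rw [mem_coordSpan] at hx ⊢
  intro r hr
  refine Finset.sum_eq_zero fun c _ => ?_
  by_cases hc : c ∈ S
  · simp [hA c hc r hr]
  · simp [hx c hc]

end CoordSpan

namespace kronRep

variable {n m : ℕ} {A B : Matrix (Fin m) (Fin n) k}

def coordSubRep (S : Finset (Fin n)) (T : Finset (Fin m))
    (hA : ∀ c ∈ S, ∀ r ∉ T, A r c = 0) (hB : ∀ c ∈ S, ∀ r ∉ T, B r c = 0) :
    SubRep (kronRep k n m A B) where
  toFun
    | false => coordSpan k (S : Set (Fin n))
    | true => coordSpan k (T : Set (Fin m))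
  compat
    | false, _, hx => mulVec_mem_coordSpan hA hx
    | true, _, hx => mulVec_mem_coordSpan hB hx

theorem dim_eq : (kronRep k n m A B).dim = n + m :=
  (Fintype.sum_bool _).trans <| (add_comm _ _).trans <|
    congrArg₂ (· + ·) (Module.finrank_fin_fun k) (Module.finrank_fin_fun k)

theorem dim_coordSubRep (S : Finset (Fin n)) (T : Finset (Fin m)) (hA hB) :
    (coordSubRep (A := A) (B := B) S T hA hB).dim = #S + #T :=
  (Fintype.sum_bool _).trans <| (add_comm _ _).trans <|
    congrArg₂ (· + ·) ((Pi.basisFun k _).finrank_span_image S)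
      ((Pi.basisFun k _).finrank_span_image T)

theorem exists_iSupIndep_coordSubRep {t : ℕ} (S : Fin t → Finset (Fin n))
    (T : Fin t → Finset (Fin m)) (hA : ∀ j, ∀ c ∈ S j, ∀ r ∉ T j, A r c = 0)
    (hB : ∀ j, ∀ c ∈ S j, ∀ r ∉ T j, B r c = 0)
    (hS : Pairwise (Disjoint on S)) (hT : Pairwise (Disjoint on T)) :
    ∃ P : SubRep (kronRep k n m A B), P.dim = #(univ.biUnion S) + #(univ.biUnion T) ∧
      ∃ N : Fin t → SubRep (kronRep k n m A B), (∀ j, (N j).dim = #(S j) + #(T j)) ∧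
        (∀ v, iSupIndep fun j => (N j).toFun v) ∧ ∀ v, ⨆ j, (N j).toFun v = P.toFun v := by
  have hunion {ι : Type} [Fintype ι] [DecidableEq ι] (U : Fin t → Finset ι) :
      ⨆ j, coordSpan k (U j : Set ι) = coordSpan k (univ.biUnion U : Set ι) := by
    simp only [coordSpan, ← span_iUnion, ← Set.image_iUnion, coe_biUnion, coe_univ,
      Set.mem_univ, Set.iUnion_true]
  have hindep {ι : Type} [Fintype ι] {U : Fin t → Finset ι} (hU : Pairwise (Disjoint on U)) :
      iSupIndep fun j => coordSpan k (U j : Set ι) :=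
    (Pi.basisFun k ι).iSupIndep_span_image fun j l hjl => disjoint_coe.2 (hU hjl)
  refine ⟨coordSubRep (univ.biUnion S) (univ.biUnion T) ?_ ?_, dim_coordSubRep ..,
    fun j => coordSubRep (S j) (T j) (hA j) (hB j), fun j => dim_coordSubRep .., ?_, ?_⟩
  · simp only [mem_biUnion, mem_univ, true_and, not_exists, forall_exists_index]
    exact fun c j hc r hr => hA j c hc r (hr j)
  · simp only [mem_biUnion, mem_univ, true_and, not_exists, forall_exists_index]
    exact fun c j hc r hr => hB j c hc r (hr j)
  · rintro (_ | _)
    exacts [hindep hS, hindep hT]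
  · rintro (_ | _)
    exacts [hunion S, hunion T]

end kronRep

section Blocks

def Fin.divBlock (n m j : ℕ) : Finset (Fin n) := {x | (x : ℕ) / m = j}

variable {n m : ℕ}

theorem Fin.card_divBlock_le (hm : 0 < m) (j : ℕ) : #(divBlock n m j) ≤ m := by
  calc #(divBlock n m j) ≤ #(Ico (j * m) (j * m + m)) := by
        refine card_le_card_of_injOn Fin.val (fun x hx => ?_) Fin.val_injective.injOn
        simp only [divBlock, coe_filter, mem_univ, true_and, Set.mem_ofPred_eq] at hx
        rw [coe_Ico, Set.mem_Ico, ← hx]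
        constructor
        · exact Nat.div_mul_le_self _ _
        · have := Nat.lt_div_mul_add (a := (x : ℕ)) hm
          omega
    _ = m := by simp

theorem Fin.pairwise_disjoint_divBlock {t : ℕ} :
    Pairwise (Disjoint on fun j : Fin t => divBlock n m j) := fun _ _ hjl =>
  disjoint_filter.2 fun _ _ hj hl => hjl (Fin.ext (hj.symm.trans hl))

theorem Fin.biUnion_divBlock {t : ℕ} (h : n ≤ t * m) :
    univ.biUnion (fun j : Fin t => divBlock n m j) = univ := by
  refine eq_univ_of_forall fun x =>
    mem_biUnion.2 ⟨⟨x / m, ?_⟩, mem_univ _, by simp [divBlock]⟩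
  have hm : 0 < m := Nat.pos_of_ne_zero fun h0 => by have := x.2; simp [h0] at h; omega
  exact (Nat.div_lt_iff_lt_mul hm).2 (x.2.trans_le h)

theorem Fin.le_card_filter_not_dvd_succ (i m : ℕ) :
    i ≤ #{c : Fin i | ¬ m ∣ (c : ℕ) + 1} + i / m := by
  have hdvd : #{c : Fin i | m ∣ (c : ℕ) + 1} ≤ i / m := by
    rw [← Nat.Ioc_filter_dvd_card_eq_div]
    refine card_le_card_of_injOn (fun c => (c : ℕ) + 1) (fun c hc => ?_) fun _ _ _ _ h =>
      Fin.ext (Nat.succ_injective h)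
    simp only [coe_filter, mem_univ, true_and, Set.mem_ofPred_eq] at hc
    simp [hc, Nat.succ_le_of_lt c.2]
  have := card_filter_add_card_filter_not (s := (univ : Finset (Fin i)))
    (fun c : Fin i => m ∣ (c : ℕ) + 1)
  simp only [card_univ, Fintype.card_fin] at this
  omega

end Blocks

namespace kronP

open Fin

/-- `¬ m ∣ c + 1` means `(c + 1) / m = c / m`, so both `a e_c = f_c` and `b e_c = f_{c+1}` lie in
the `j`-th block at vertex `2`. -/
def srcBlock (m i j : ℕ) : Finset (Fin i) := {c ∈ divBlock i m j | ¬ m ∣ (c : ℕ) + 1}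

variable {m i : ℕ}

theorem idZeroMat_eq_zero (j : ℕ) :
    ∀ c ∈ srcBlock m i j, ∀ r ∉ divBlock (i + 1) m j, idZeroMat k i r c = 0 := by
  intro c hc r hr
  simp only [srcBlock, divBlock, mem_filter, mem_univ, true_and] at hc hr
  refine if_neg fun hrc => hr ?_
  rw [hrc, hc.1]

theorem zeroIdMat_eq_zero (j : ℕ) :
    ∀ c ∈ srcBlock m i j, ∀ r ∉ divBlock (i + 1) m j, zeroIdMat k i r c = 0 := by
  intro c hc r hr
  simp only [srcBlock, divBlock, mem_filter, mem_univ, true_and] at hc hr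
  refine if_neg fun hrc => hr ?_
  rw [hrc, Nat.succ_div_of_not_dvd hc.2, hc.1]

theorem biUnion_srcBlock {t : ℕ} (h : i ≤ t * m) :
    univ.biUnion (fun j : Fin t => srcBlock m i j) =
      ({c | ¬ m ∣ (c : ℕ) + 1} : Finset (Fin i)) := by
  unfold srcBlock
  rw [← filter_biUnion, biUnion_divBlock h]

theorem dim_eq : (kronP k i).dim = i + (i + 1) := kronRep.dim_eq

theorem exists_iSupIndep_blocks (hm : 0 < m) (i : ℕ) :
    ∃ P : SubRep (kronP k i), P.dim = #{c : Fin i | ¬ m ∣ (c : ℕ) + 1} + (i + 1) ∧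
      ∃ N : Fin (i + 1) → SubRep (kronP k i), (∀ j, (N j).dim ≤ 2 * m) ∧
        (∀ v, iSupIndep fun j => (N j).toFun v) ∧ ∀ v, ⨆ j, (N j).toFun v = P.toFun v := by
  unfold kronP
  have hcover : ∀ n ≤ i + 1, n ≤ (i + 1) * m :=
    fun n hn => hn.trans (Nat.le_mul_of_pos_right _ hm)
  obtain ⟨P, hP, N, hN, hindep, hsup⟩ := kronRep.exists_iSupIndep_coordSubRep
    (fun j : Fin (i + 1) => srcBlock m i j) (fun j => divBlock (i + 1) m j)
    (fun j => idZeroMat_eq_zero (k := k) j) (fun j => zeroIdMat_eq_zero j)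
    (fun _ _ hjl => disjoint_filter_filter (pairwise_disjoint_divBlock hjl))
    pairwise_disjoint_divBlock
  refine ⟨P, ?_, N, fun j => ?_, hindep, hsup⟩
  · rw [hP, biUnion_srcBlock (hcover i i.le_succ), biUnion_divBlock (hcover _ le_rfl),
      card_univ, Fintype.card_fin]
  · have hsrc : #(srcBlock m i j) ≤ m :=
      (card_le_card (filter_subset _ _)).trans (card_divBlock_le hm j)
    have htgt := card_divBlock_le (n := i + 1) hm j
    rw [hN j]
    omega

end kronP

/-- the family `{P_i : i ≥ 0}` of indecomposable preprojective
representations of the 2-Kronecker quiver is hyperfinite, over any field. -/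
theorem stmt_9 {k : Type u} [Field k] :
    QuivRepHyperfinite (Set.range (kronP k)) := by
  intro ε hε
  obtain ⟨m, hm⟩ := exists_nat_gt ε⁻¹
  have hm0 : 0 < m := by exact_mod_cast (inv_pos.2 hε).trans hm
  refine ⟨2 * m, by omega, ?_⟩
  rintro _ ⟨i, rfl⟩
  obtain ⟨P, hP, N, hN, hindep, hsup⟩ := kronP.exists_iSupIndep_blocks (k := k) hm0 i
  refine ⟨P, ?_, i + 1, N, hN, hindep, hsup⟩
  have hkept : (i : ℝ) ≤ #{c : Fin i | ¬ m ∣ (c : ℕ) + 1} + (i / m : ℕ) := by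
    exact_mod_cast Fin.le_card_filter_not_dvd_succ i m
  have hq : ((i / m : ℕ) : ℝ) * m ≤ i := by exact_mod_cast Nat.div_mul_le_self i m
  have hmε : 1 ≤ ε * m := (inv_le_iff_one_le_mul₀' hε).1 hm.le
  rw [hP, kronP.dim_eq]
  push_cast
  nlinarith [mul_le_mul_of_nonneg_left hmε (Nat.cast_nonneg (α := ℝ) (i / m))]
end

section
/- Let k be any field and Q the 2-Kronecker quiver with two vertices 1, 2 and two arrows a, b : 1 → 2. Let n ≥ 1, let C be the companion matrix of a monic polynomial of degree n over k, and let R be the representation with R(1) = R(2) = k^n, where a acts as the identity and b acts as C. Then R has a subrepresentation Y with dim Y = dim R − 1 = 2n − 1 such that Y is isomorphic to the preprojective representation P_{n−1} (where P_i has P_i(1) = k^i, P_i(2) = k^{i+1}, with a acting as [id; 0] and b acting as [0; id]). -/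
/-!
Hyperfiniteness for families of finite-dimensional representations of finite quivers,
following Elek.
-/

universe u

variable {k : Type u} [Field k] {Q : FinQuiver}

/-- The representation induced on a subrepresentation. -/
noncomputable def SubRep.toRep {k : Type u} [Field k] {Q : FinQuiver} {M : QuivRep k Q}
    (Y : SubRep M) : QuivRep k Q where
  space := fun i => ↥(Y.toFun i)
  map := fun a => (M.map a).restrict (Y.compat a)

/-- An isomorphism of representations of `Q`: compatible linear equivalences at
every vertex. -/
structure RepIso {k : Type u} [Field k] {Q : FinQuiver} (M N : QuivRep k Q) where
  equiv : ∀ i : Q.vertex, M.space i ≃ₗ[k] N.space i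
  comm : ∀ (a : Q.arrow) (x : M.space (Q.src a)),
    equiv (Q.tgt a) (M.map a x) = N.map a (equiv (Q.src a) x)

/-- The companion matrix of a (monic) polynomial `p` of degree `n`: it sends the basis
vector `e_j` to `e_{j+1}` for `j < n - 1`, and the last basis vector to minus the vector
of coefficients of `p`. -/
def companionMatrix {k : Type u} [Field k] (n : ℕ) (p : Polynomial k) :
    Matrix (Fin n) (Fin n) k :=
  Matrix.of fun r c =>
    if (c : ℕ) + 1 < n then (if (r : ℕ) = (c : ℕ) + 1 then 1 else 0) else -p.coeff (r : ℕ)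


/-!
Every arrow of the Kronecker quiver ends at vertex `2`, so a subspace `V ⊆ R(1)` together with
all of `R(2)` is a subrepresentation. Take for `V` the span of `e₁, …, e_{n-1}`, the image of
`[id; 0]`. The companion matrix shifts `e_j` to `e_{j+1}` for `j < n`, so on `V` the arrows act
as `id * [id; 0] = [id; 0]` and `C * [id; 0] = [0; id]`, which is exactly `P_{n-1}`.
-/

-- `Kronecker` is not reducible, so instance search does not identify `Bool` with its vertices.
instance (M : QuivRep k Kronecker) (i : Bool) : AddCommGroup (M.space i) := M.acg i

instance (M : QuivRep k Kronecker) (i : Bool) : Module k (M.space i) := M.mod i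

def SubRep.ofSource (M : QuivRep k Kronecker) (V : Submodule k (M.space false)) :
    SubRep M where
  toFun := fun i => match i with
    | false => V
    | true => ⊤
  compat := fun _ _ _ => trivial

theorem SubRep.ofSource_dim (M : QuivRep k Kronecker) (V : Submodule k (M.space false)) :
    (SubRep.ofSource M V).dim = Module.finrank k V + Module.finrank k (M.space true) := by
  rw [SubRep.dim, add_comm]
  erw [Fintype.sum_bool]
  exact congrArg (· + _) (finrank_top k (M.space true))

namespace kronRep

variable {n m r : ℕ}

theorem ofSource_range_dim (A B : Matrix (Fin r) (Fin n) k) (E : Matrix (Fin n) (Fin m) k)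
    (hE : Function.Injective (Matrix.toLin' E)) :
    (SubRep.ofSource (kronRep k n r A B) (LinearMap.range (Matrix.toLin' E))).dim = m + r := by
  rw [SubRep.ofSource_dim]
  show Module.finrank k (LinearMap.range (Matrix.toLin' E)) + Module.finrank k (Fin r → k) = _
  rw [LinearMap.finrank_range_of_inj hE, Module.finrank_fin_fun, Module.finrank_fin_fun]

noncomputable def ofSourceRangeIso (A B : Matrix (Fin r) (Fin n) k)
    (E : Matrix (Fin n) (Fin m) k) (hE : Function.Injective (Matrix.toLin' E)) :
    RepIso (SubRep.ofSource (kronRep k n r A B) (LinearMap.range (Matrix.toLin' E))).toRep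
      (kronRep k m r (A * E) (B * E)) where
  equiv := fun i => match i with
    | false => (LinearEquiv.ofInjective _ hE).symm
    | true => Submodule.topEquiv
  comm := fun a x => by
    obtain ⟨y, rfl⟩ := (LinearEquiv.ofInjective _ hE).surjective x
    have map_eq (X : Matrix (Fin r) (Fin n) k) : Matrix.toLin' X (Matrix.toLin' E y) =
        Matrix.toLin' (X * E)
          ((LinearEquiv.ofInjective _ hE).symm (LinearEquiv.ofInjective _ hE y)) := by
      rw [LinearEquiv.symm_apply_apply, Matrix.toLin'_mul, LinearMap.comp_apply]
    cases a
    exacts [map_eq A, map_eq B]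

end kronRep

theorem idZeroMat_mulVec_castSucc {m : ℕ} (y : Fin m → k) (i : Fin m) :
    (idZeroMat k m).mulVec y i.castSucc = y i := by
  simp [idZeroMat, Matrix.mulVec, dotProduct, Fin.val_inj]

theorem idZeroMat_toLin'_injective (m : ℕ) :
    Function.Injective (Matrix.toLin' (idZeroMat k m)) :=
  fun y z h => funext fun i => by
    simpa only [Matrix.toLin'_apply, idZeroMat_mulVec_castSucc] using congrFun h i.castSucc

theorem companionMatrix_mul_idZeroMat (m : ℕ) (p : Polynomial k) :
    companionMatrix (m + 1) p * idZeroMat k m = zeroIdMat k m := by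
  ext r c
  simp [companionMatrix, idZeroMat, zeroIdMat, Matrix.mul_apply, Fin.sum_univ_castSucc,
    Fin.val_inj, c.is_lt.ne']

theorem stmt_10_general {k : Type u} [Field k] (n : ℕ) (hn : 1 ≤ n)
    (p : Polynomial k) :
    ∃ Y : SubRep (kronRep k n n (1 : Matrix (Fin n) (Fin n) k) (companionMatrix n p)),
      Y.dim = 2 * n - 1 ∧ Nonempty (RepIso Y.toRep (kronP k (n - 1))) := by
  obtain ⟨m, rfl⟩ : ∃ m, n = m + 1 := ⟨n - 1, by omega⟩
  have hE := idZeroMat_toLin'_injective (k := k) m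
  refine ⟨SubRep.ofSource _ (LinearMap.range (Matrix.toLin' (idZeroMat k m))), ?_, ?_⟩
  · rw [kronRep.ofSource_range_dim _ _ _ hE]
    omega
  · have iso := kronRep.ofSourceRangeIso 1 (companionMatrix (m + 1) p) _ hE
    rw [Matrix.one_mul, companionMatrix_mul_idZeroMat] at iso
    rw [Nat.add_sub_cancel]
    exact ⟨iso⟩

/-- let `R` be the regular representation of the 2-Kronecker quiver with
`R(1) = R(2) = k^n`, where `a` acts as the identity and `b` acts as the companion matrix
of a monic polynomial of degree `n ≥ 1`. Then `R` has a subrepresentation `Y` of dimension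
`2n - 1` isomorphic to the preprojective representation `P_{n-1}`. -/
theorem stmt_10 {k : Type u} [Field k] (n : ℕ) (hn : 1 ≤ n)
    (p : Polynomial k) (hmonic : p.Monic) (hdeg : p.natDegree = n) :
    ∃ Y : SubRep (kronRep k n n (1 : Matrix (Fin n) (Fin n) k) (companionMatrix n p)),
      Y.dim = 2 * n - 1 ∧ Nonempty (RepIso Y.toRep (kronP k (n - 1))) :=
  stmt_10_general n hn p
end

section
/- Let k be any field and Q the 2-Kronecker quiver with two vertices 1, 2 and two arrows a, b : 1 → 2. Consider the family R of all representations R_n(φ, ψ) with R_n(1) = R_n(2) = k^n (n ≥ 1), where a acts as φ and b acts as ψ, and where either φ is the identity and ψ is the companion matrix of a power of a monic irreducible polynomial over k, or ψ is the identity and φ is the companion matrix of a polynomial of the form λ^m. Then R is hyperfinite. -/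
/-!
Hyperfiniteness for families of finite-dimensional representations of finite quivers,
following Elek.
-/

universe u

variable {k : Type u} [Field k] {Q : FinQuiver}

/-!
Off its last column, both the identity and a companion matrix map `e j` into
`span {e j, e (j + 1)}`. Cut the coordinates `0, …, n - 1` into consecutive blocks of length
`ℓ`. For each block, the coordinate subspaces spanned at vertex 1 by the `e j` whose successor
`e (j + 1)` lies in the same block, and at vertex 2 by the whole block, form a subrepresentation
of dimension at most `2 ℓ`, and these subrepresentations are independent. Their sum misses at
most `n / ℓ + 1` of the `2 n` dimensions, which is at most `2 ε n` once `ℓ ≥ 1 / ε` and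
`n > ℓ`; for `n ≤ ℓ` the representation itself is small enough.
-/

open Matrix

section CoordSubspace

variable {R : Type*} [CommRing R] {ι : Type*} [Fintype ι]

variable (R) in
noncomputable def coordSubspace (S : Set ι) : Submodule R (ι → R) :=
  (Finsupp.supported R R S).map (Finsupp.linearEquivFunOnFinite R R ι).toLinearMap

theorem mem_coordSubspace {S : Set ι} {v : ι → R} :
    v ∈ coordSubspace R S ↔ ∀ i ∉ S, v i = 0 := by
  simp [coordSubspace, Submodule.mem_map_equiv, Finsupp.mem_supported']

theorem iSup_coordSubspace {β : Type*} (S : β → Set ι) :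
    ⨆ b, coordSubspace R (S b) = coordSubspace R (⋃ b, S b) := by
  simp only [coordSubspace, Finsupp.supported_iUnion, Submodule.map_iSup]

theorem iSupIndep_coordSubspace {β : Type*} {S : β → Set ι}
    (hS : Pairwise fun a b => Disjoint (S a) (S b)) :
    iSupIndep fun b => coordSubspace R (S b) := by
  refine LinearMap.iSupIndep_map _ (Finsupp.linearEquivFunOnFinite R R ι).injective ?_
  intro b
  refine Disjoint.mono_right (iSup₂_le fun c hc => Finsupp.supported_mono
    (Set.subset_iUnion₂ (s := fun c (_ : c ≠ b) => S c) c hc)) ?_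
  exact Finsupp.disjoint_supported_supported
    (Set.disjoint_iUnion₂_right.mpr fun c hc => hS hc.symm)

theorem finrank_coordSubspace [StrongRankCondition R] (s : Finset ι) :
    Module.finrank R (coordSubspace R (s : Set ι)) = s.card := by
  classical
  rw [coordSubspace, LinearEquiv.finrank_map_eq,
    (Finsupp.supportedEquivFinsupp (M := R) (R := R) (s : Set ι)).finrank_eq]
  simp

theorem mulVec_mem_coordSubspace {κ : Type*} [Fintype κ] {A : Matrix κ ι R} {S : Set ι}
    {T : Set κ} (hA : ∀ r ∉ T, ∀ c ∈ S, A r c = 0)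
    {v : ι → R} (hv : v ∈ coordSubspace R S) : A *ᵥ v ∈ coordSubspace R T := by
  rw [mem_coordSubspace] at hv ⊢
  intro r hr
  refine Finset.sum_eq_zero fun c _ => ?_
  by_cases hc : c ∈ S
  · simp [hA r hr c hc]
  · simp [hv c hc]

end CoordSubspace

namespace SubRep

variable {M : QuivRep k Q}

def IsSumOfDimLE (P : SubRep M) (L : ℕ) : Prop :=
  ∃ (t : ℕ) (N : Fin t → SubRep M), (∀ j, (N j).dim ≤ L) ∧
    (∀ i, iSupIndep fun j => (N j).toFun i) ∧ (∀ i, (⨆ j, (N j).toFun i) = P.toFun i)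

variable (M) in
def top : SubRep M where
  toFun _ := ⊤
  compat _ _ _ := Submodule.mem_top

theorem dim_top : (top M).dim = M.dim :=
  Finset.sum_congr rfl fun i _ => finrank_top k (M.space i)

theorem isSumOfDimLE_top {L : ℕ} (h : M.dim ≤ L) : (top M).IsSumOfDimLE L :=
  ⟨1, fun _ => top M, fun _ => dim_top.trans_le h, fun _ => iSupIndep_subsingleton _,
    fun _ => iSup_const⟩

end SubRep

def Matrix.IsLowerBidiagonalOffLastCol {R : Type*} [Zero R] {n : ℕ}
    (A : Matrix (Fin n) (Fin n) R) : Prop :=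
  ∀ r c : Fin n, (c : ℕ) + 1 < n → A r c ≠ 0 → (r : ℕ) = c ∨ (r : ℕ) = c + 1

theorem Matrix.isLowerBidiagonalOffLastCol_one {R : Type*} [Zero R] [One R] {n : ℕ} :
    (1 : Matrix (Fin n) (Fin n) R).IsLowerBidiagonalOffLastCol := by
  intro r c _ h
  exact Or.inl (congrArg Fin.val (not_imp_comm.mp (Matrix.one_apply_ne) h))

theorem isLowerBidiagonalOffLastCol_companionMatrix {n : ℕ} (p : Polynomial k) :
    (companionMatrix n p).IsLowerBidiagonalOffLastCol := by
  intro r c hc h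
  simp only [companionMatrix, Matrix.of_apply, hc, if_true, ne_eq, ite_eq_right_iff,
    not_forall] at h
  exact Or.inr h.1

section Kronecker

variable {n m : ℕ}

theorem kronRep_dim (A B : Matrix (Fin m) (Fin n) k) : (kronRep k n m A B).dim = m + n := by
  refine (Fintype.sum_bool _).trans ?_
  show Module.finrank k (Fin m → k) + Module.finrank k (Fin n → k) = m + n
  simp

noncomputable def kronCoordSubRep {A B : Matrix (Fin m) (Fin n) k} (S : Set (Fin n))
    (T : Set (Fin m)) (h : ∀ r ∉ T, ∀ c ∈ S, A r c = 0 ∧ B r c = 0) :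
    SubRep (kronRep k n m A B) where
  toFun
    | false => coordSubspace k S
    | true => coordSubspace k T
  compat
    | false, _, hx => mulVec_mem_coordSubspace (fun r hr c hc => (h r hr c hc).1) hx
    | true, _, hx => mulVec_mem_coordSubspace (fun r hr c hc => (h r hr c hc).2) hx

theorem dim_kronCoordSubRep {A B : Matrix (Fin m) (Fin n) k} (s : Finset (Fin n))
    (t : Finset (Fin m))
    (h : ∀ r ∉ (t : Set (Fin m)), ∀ c ∈ (s : Set (Fin n)), A r c = 0 ∧ B r c = 0) :
    (kronCoordSubRep (s : Set (Fin n)) (t : Set (Fin m)) h).dim = t.card + s.card := by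
  refine (Fintype.sum_bool _).trans ?_
  show Module.finrank k (coordSubspace k (t : Set (Fin m))) +
    Module.finrank k (coordSubspace k (s : Set (Fin n))) = t.card + s.card
  rw [finrank_coordSubspace, finrank_coordSubspace]

end Kronecker

section Blocks

variable {n ℓ : ℕ}

def coordBlock (n ℓ b : ℕ) : Finset (Fin n) := {j | (j : ℕ) / ℓ = b}

def sameBlockAsSucc (n ℓ : ℕ) : Finset (Fin n) := {j | (j : ℕ) + 1 < n ∧ ¬ ℓ ∣ (j : ℕ) + 1}

theorem card_coordBlock_le (hℓ : 0 < ℓ) (b : ℕ) : (coordBlock n ℓ b).card ≤ ℓ := by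
  calc (coordBlock n ℓ b).card ≤ (Finset.Ico (b * ℓ) (b * ℓ + ℓ)).card := by
        refine Finset.card_le_card_of_injOn (fun j => (j : ℕ)) (fun j hj => ?_)
          Fin.val_injective.injOn
        simp only [coordBlock, Finset.coe_filter, Finset.mem_univ, true_and,
          Set.mem_ofPred_eq] at hj
        rw [Finset.mem_coe, Finset.mem_Ico, ← hj]
        exact ⟨Nat.div_mul_le_self _ _, Nat.lt_div_mul_add hℓ⟩
    _ = ℓ := by rw [Nat.card_Ico, Nat.add_sub_cancel_left]

theorem le_card_sameBlockAsSucc : n ≤ (sameBlockAsSucc n ℓ).card + n / ℓ + 1 := by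
  have hcompl :
      (Finset.univ.filter fun j : Fin n => ¬((j : ℕ) + 1 < n ∧ ¬ ℓ ∣ (j : ℕ) + 1)).card
        ≤ n / ℓ + 1 := by
    calc _ ≤ (insert (n - 1) ((Finset.range n).filter fun e => ℓ ∣ e + 1)).card := by
          refine Finset.card_le_card_of_injOn (fun j => (j : ℕ)) (fun j hj => ?_)
            Fin.val_injective.injOn
          simp only [Finset.coe_filter, Finset.mem_univ, true_and, Set.mem_ofPred_eq] at hj
          simp only [Finset.coe_insert, Finset.coe_filter, Finset.mem_range, Set.mem_insert_iff,
            Set.mem_ofPred_eq]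
          omega
      _ ≤ n / ℓ + 1 := (Finset.card_insert_le _ _).trans_eq (by rw [Nat.card_multiples])
  have := Finset.card_filter_add_card_filter_not (s := (Finset.univ : Finset (Fin n)))
    (fun j : Fin n => (j : ℕ) + 1 < n ∧ ¬ ℓ ∣ (j : ℕ) + 1)
  simp only [Finset.card_univ, Fintype.card_fin] at this
  rw [sameBlockAsSucc]
  omega

theorem Matrix.IsLowerBidiagonalOffLastCol.apply_eq_zero {A : Matrix (Fin n) (Fin n) k}
    (hA : A.IsLowerBidiagonalOffLastCol) (b : ℕ) :
    ∀ r ∉ (coordBlock n ℓ b : Set (Fin n)),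
      ∀ c ∈ ((sameBlockAsSucc n ℓ ∩ coordBlock n ℓ b : Finset (Fin n)) : Set (Fin n)),
        A r c = 0 := by
  intro r hr c hc
  simp only [sameBlockAsSucc, coordBlock, Finset.coe_inter, Finset.coe_filter,
    Finset.mem_univ, true_and, Set.mem_inter_iff, Set.mem_ofPred_eq] at hr hc
  obtain ⟨⟨hcn, hdvd⟩, rfl⟩ := hc
  by_contra hAc
  rcases hA r c hcn hAc with h | h
  · exact hr (by rw [h])
  · exact hr (by rw [h, Nat.succ_div_of_not_dvd hdvd])

end Blocks

theorem exists_subRep_isSumOfDimLE_two_mul {n ℓ : ℕ} (hℓ : 0 < ℓ)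
    {A B : Matrix (Fin n) (Fin n) k}
    (hA : A.IsLowerBidiagonalOffLastCol) (hB : B.IsLowerBidiagonalOffLastCol) :
    ∃ P : SubRep (kronRep k n n A B), 2 * n ≤ P.dim + n / ℓ + 1 ∧ P.IsSumOfDimLE (2 * ℓ) := by
  have hblock (b : ℕ) := fun r hr c hc => And.intro (hA.apply_eq_zero (ℓ := ℓ) b r hr c hc)
    (hB.apply_eq_zero b r hr c hc)
  let N (b : Fin n) : SubRep (kronRep k n n A B) := kronCoordSubRep _ _ (hblock b)
  let P : SubRep (kronRep k n n A B) :=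
    kronCoordSubRep (sameBlockAsSucc n ℓ : Set (Fin n)) (Finset.univ : Finset (Fin n))
      (fun r hr => absurd (Finset.mem_coe.mpr (Finset.mem_univ r)) hr)
  have hdisj : Pairwise fun b b' : Fin n => Disjoint (coordBlock n ℓ b : Set (Fin n))
      (coordBlock n ℓ b') := fun b b' hbb' => by
    simp only [coordBlock, Finset.coe_filter, Finset.mem_univ, true_and]
    exact Set.disjoint_left.mpr fun j hb hb' => hbb' (Fin.ext (hb.symm.trans hb'))
  have hcover (j : Fin n) : ∃ b : Fin n, j ∈ coordBlock n ℓ b :=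
    ⟨⟨j / ℓ, (Nat.div_le_self _ _).trans_lt j.2⟩, by simp [coordBlock]⟩
  refine ⟨P, ?_, n, N, fun b => ?_, ?_, ?_⟩
  · rw [dim_kronCoordSubRep]
    simpa [two_mul, add_assoc] using le_card_sameBlockAsSucc (n := n) (ℓ := ℓ)
  · rw [dim_kronCoordSubRep, two_mul]
    exact add_le_add (card_coordBlock_le hℓ b)
      ((Finset.card_le_card Finset.inter_subset_right).trans (card_coordBlock_le hℓ b))
  · rintro (_ | _)
    · exact iSupIndep_coordSubspace fun b b' hbb' => (hdisj hbb').mono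
        (by simp) (by simp)
    · exact iSupIndep_coordSubspace hdisj
  · rintro (_ | _)
    · refine (iSup_coordSubspace _).trans (congrArg _ ?_)
      ext j
      simp [hcover]
    · refine (iSup_coordSubspace _).trans (congrArg _ ?_)
      ext j
      simp [hcover]

theorem exists_subRep_isSumOfDimLE {ε : ℝ} (hε : 0 < ε) {n : ℕ}
    {A B : Matrix (Fin n) (Fin n) k}
    (hA : A.IsLowerBidiagonalOffLastCol) (hB : B.IsLowerBidiagonalOffLastCol) :
    ∃ P : SubRep (kronRep k n n A B), (1 - ε) * ((kronRep k n n A B).dim : ℝ) ≤ P.dim ∧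
      P.IsSumOfDimLE (2 * ⌈1 / ε⌉₊) := by
  set ℓ := ⌈1 / ε⌉₊
  have hεℓ : 1 ≤ ε * ℓ := by
    rw [← div_le_iff₀' hε]
    exact Nat.le_ceil _
  by_cases hn : n ≤ ℓ
  · refine ⟨SubRep.top _, ?_, SubRep.isSumOfDimLE_top (by rw [kronRep_dim]; omega)⟩
    rw [SubRep.dim_top]
    nlinarith [(Nat.cast_nonneg _ : (0 : ℝ) ≤ (kronRep k n n A B).dim)]
  · have hℓ : 0 < ℓ := by positivity
    obtain ⟨P, hPdim, hP⟩ := exists_subRep_isSumOfDimLE_two_mul hℓ hA hB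
    refine ⟨P, ?_, hP⟩
    have hdiv : ((n / ℓ : ℕ) : ℝ) ≤ ε * n :=
      Nat.cast_div_le.trans ((div_le_iff₀ (by positivity)).mpr (by nlinarith))
    have hone : 1 ≤ ε * n := hεℓ.trans (by gcongr; exact_mod_cast (not_le.mp hn).le)
    have hPdim' : 2 * (n : ℝ) ≤ P.dim + ((n / ℓ : ℕ) : ℝ) + 1 := by exact_mod_cast hPdim
    rw [kronRep_dim]
    push_cast
    linarith

/-- the family of all indecomposable regular representations
`R_n(φ, ψ)` of the 2-Kronecker quiver — with `R_n(1) = R_n(2) = k^n`, `a` acting as `φ`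
and `b` acting as `ψ`, where either `φ = id` and `ψ` is the companion matrix of a power of
a monic irreducible polynomial, or `ψ = id` and `φ` is the companion matrix of a
polynomial `λ^m` — is hyperfinite, over any field. -/
theorem stmt_11 {k : Type u} [Field k] :
    QuivRepHyperfinite {M : QuivRep k Kronecker | ∃ n : ℕ, 1 ≤ n ∧
      ((∃ q : Polynomial k, q.Monic ∧ Irreducible q ∧ ∃ m : ℕ,
          (q ^ m).natDegree = n ∧ M = kronRep k n n 1 (companionMatrix n (q ^ m)))
        ∨ M = kronRep k n n (companionMatrix n (Polynomial.X ^ n)) 1)} := by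
  intro ε hε
  refine ⟨2 * ⌈1 / ε⌉₊, by positivity, ?_⟩
  rintro M ⟨n, -, ⟨q, -, -, m, -, rfl⟩ | rfl⟩
  · exact exists_subRep_isSumOfDimLE hε isLowerBidiagonalOffLastCol_one
      (isLowerBidiagonalOffLastCol_companionMatrix _)
  · exact exists_subRep_isSumOfDimLE hε (isLowerBidiagonalOffLastCol_companionMatrix _)
      isLowerBidiagonalOffLastCol_one
end

section
/- Let k be a field and Q a finite quiver. Suppose Q' is a subquiver of Q, i.e., Q'₀ ⊆ Q₀ and Q'₁ ⊆ Q₁ with every arrow of Q'₁ having its source and target in Q'₀. If the family of all finite-dimensional k-representations of Q' is not hyperfinite, then the family of all finite-dimensional k-representations of Q is not hyperfinite; in other words, if kQ' is not of amenable representation type, then neither is kQ. -/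
/-!
Hyperfiniteness for families of finite-dimensional representations of finite quivers,
following Elek.
-/

universe u

variable {k : Type u} [Field k] {Q : FinQuiver}

/-- `Q'` is a subquiver of `Q`: the vertices and arrows of `Q'` embed into those of `Q`,
compatibly with sources and targets. -/
structure FinQuiver.SubquiverOf (Q' Q : FinQuiver) where
  vertexEmb : Q'.vertex ↪ Q.vertex
  arrowEmb : Q'.arrow ↪ Q.arrow
  src_comm : ∀ a : Q'.arrow, Q.src (arrowEmb a) = vertexEmb (Q'.src a)
  tgt_comm : ∀ a : Q'.arrow, Q.tgt (arrowEmb a) = vertexEmb (Q'.tgt a)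

/-!
Extend a representation `M'` of `Q'` by zero to `Q`. This preserves the dimension, and a
subrepresentation of the extension restricts to a subrepresentation of `M'` of the same dimension;
restriction also preserves vertexwise independence and sums. So restricting the witnesses of
hyperfiniteness of the extensions gives witnesses for the representations of `Q'`, with the same
bound `L_ε`.
-/

namespace FinQuiver.SubquiverOf

variable {Q' : FinQuiver} (hsub : Q'.SubquiverOf Q) (M' : QuivRep k Q')

open Classical in
/-- The space at `i` is indexed by the vertices of `Q'` above `i`, of which there is at most one;
an arrow of `Q` acts through the unique arrow of `Q'` above it, if any. -/
noncomputable def extendByZero : QuivRep k Q where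
  space i := ∀ j : {j : Q'.vertex // hsub.vertexEmb j = i}, M'.space j
  map a := LinearMap.pi fun j =>
    if h : ∃ a' : Q'.arrow, hsub.arrowEmb a' = a ∧ Q'.tgt a' = j.1 then
      (LinearEquiv.cast (M := M'.space) h.choose_spec.2).toLinearMap ∘ₗ M'.map h.choose ∘ₗ
        LinearMap.proj (φ := fun j : {j // hsub.vertexEmb j = Q.src a} => M'.space j.1)
          ⟨Q'.src h.choose, by rw [← hsub.src_comm, h.choose_spec.1]⟩
    else 0

theorem extendByZero_map_arrowEmb_apply (a' : Q'.arrow)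
    (x : (hsub.extendByZero M').space (Q.src (hsub.arrowEmb a')))
    (hs : hsub.vertexEmb (Q'.src a') = Q.src (hsub.arrowEmb a'))
    (ht : hsub.vertexEmb (Q'.tgt a') = Q.tgt (hsub.arrowEmb a')) :
    (hsub.extendByZero M').map (hsub.arrowEmb a') x ⟨Q'.tgt a', ht⟩ =
      M'.map a' (x ⟨Q'.src a', hs⟩) := by
  have h : ∃ b, hsub.arrowEmb b = hsub.arrowEmb a' ∧ Q'.tgt b = Q'.tgt a' := ⟨a', rfl, rfl⟩
  have key : ∀ b (_ : b = a') (h₂ : Q'.tgt b = Q'.tgt a') hb,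
      LinearEquiv.cast (R := k) (M := M'.space) h₂ (M'.map b (x ⟨Q'.src b, hb⟩)) =
        M'.map a' (x ⟨Q'.src a', hs⟩) := by
    rintro b rfl h₂ hb
    rfl
  simp only [extendByZero]
  erw [LinearMap.pi_apply, dif_pos h]
  exact key _ (hsub.arrowEmb.injective h.choose_spec.1) h.choose_spec.2 _

instance (i' : Q'.vertex) : Unique {j : Q'.vertex // hsub.vertexEmb j = hsub.vertexEmb i'} where
  default := ⟨i', rfl⟩
  uniq j := Subtype.ext (hsub.vertexEmb.injective j.2)

noncomputable def extendByZeroEquiv (i' : Q'.vertex) :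
    (hsub.extendByZero M').space (hsub.vertexEmb i') ≃ₗ[k] M'.space i' :=
  LinearEquiv.piUnique k fun j : {j // hsub.vertexEmb j = hsub.vertexEmb i'} => M'.space j.1

theorem finrank_extendByZero_of_notMem_range {i : Q.vertex}
    (hi : i ∉ Set.range hsub.vertexEmb) :
    Module.finrank k ((hsub.extendByZero M').space i) = 0 := by
  have : IsEmpty {j // hsub.vertexEmb j = i} := ⟨fun j => hi ⟨j.1, j.2⟩⟩
  have : Subsingleton ((hsub.extendByZero M').space i) := ⟨fun _ _ => funext isEmptyElim⟩
  exact Module.finrank_zero_of_subsingleton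

theorem dim_extendByZero : (hsub.extendByZero M').dim = M'.dim :=
  (Fintype.sum_of_injective hsub.vertexEmb hsub.vertexEmb.injective _ _
    (fun _ hi => hsub.finrank_extendByZero_of_notMem_range M' hi)
    (fun i' => (hsub.extendByZeroEquiv M' i').finrank_eq.symm)).symm

variable {hsub M'}

noncomputable def restrictSubspace (S : ∀ i, Submodule k ((hsub.extendByZero M').space i))
    (i' : Q'.vertex) : Submodule k (M'.space i') :=
  (S (hsub.vertexEmb i')).map (hsub.extendByZeroEquiv M' i' : _ →ₗ[k] M'.space i')

theorem mem_restrictSubspace_iff (S : ∀ i, Submodule k ((hsub.extendByZero M').space i))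
    {i' : Q'.vertex} {i : Q.vertex} (h : hsub.vertexEmb i' = i) {x : M'.space i'} :
    x ∈ restrictSubspace S i' ↔ ∃ y ∈ S i, y ⟨i', h⟩ = x := by
  subst h
  exact Submodule.mem_map

noncomputable def restrict (P : SubRep (hsub.extendByZero M')) : SubRep M' where
  toFun := restrictSubspace P.toFun
  compat a' x hx := by
    obtain ⟨y, hy, rfl⟩ := (mem_restrictSubspace_iff P.toFun (hsub.src_comm a').symm).1 hx
    refine (mem_restrictSubspace_iff P.toFun (hsub.tgt_comm a').symm).2
      ⟨_, P.compat _ y hy, ?_⟩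
    exact hsub.extendByZero_map_arrowEmb_apply M' a' y _ _

theorem dim_restrict (P : SubRep (hsub.extendByZero M')) : (restrict P).dim = P.dim := by
  refine Fintype.sum_of_injective hsub.vertexEmb hsub.vertexEmb.injective _ _ (fun i hi => ?_)
    (fun i' => (hsub.extendByZeroEquiv M' i').finrank_map_eq _)
  have := Submodule.finrank_le (P.toFun i)
  rwa [hsub.finrank_extendByZero_of_notMem_range M' hi, Nat.le_zero] at this

theorem iSupIndep_restrictSubspace {ι : Type*}
    {S : ι → ∀ i, Submodule k ((hsub.extendByZero M').space i)} {i' : Q'.vertex}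
    (hS : iSupIndep fun j => S j (hsub.vertexEmb i')) :
    iSupIndep fun j => restrictSubspace (S j) i' :=
  hS.map_orderIso (Submodule.orderIsoMapComap (hsub.extendByZeroEquiv M' i'))

theorem iSup_restrictSubspace_eq {ι : Type*}
    {S : ι → ∀ i, Submodule k ((hsub.extendByZero M').space i)}
    {T : ∀ i, Submodule k ((hsub.extendByZero M').space i)} {i' : Q'.vertex}
    (h : ⨆ j, S j (hsub.vertexEmb i') = T (hsub.vertexEmb i')) :
    ⨆ j, restrictSubspace (S j) i' = restrictSubspace T i' := by
  rw [restrictSubspace, ← h, Submodule.map_iSup]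
  rfl

end FinQuiver.SubquiverOf

open FinQuiver.SubquiverOf in
theorem QuivRepHyperfinite.preimage_extendByZero {Q' : FinQuiver} (hsub : Q'.SubquiverOf Q)
    {𝓜 : Set (QuivRep k Q)} (h𝓜 : QuivRepHyperfinite 𝓜) :
    QuivRepHyperfinite (hsub.extendByZero ⁻¹' 𝓜) := by
  intro ε hε
  obtain ⟨L, hL, hwit⟩ := h𝓜 ε hε
  refine ⟨L, hL, fun M' hM' => ?_⟩
  obtain ⟨P, hP, t, N, hNL, hind, hsup⟩ := hwit _ hM'
  refine ⟨restrict P, ?_, t, fun j => restrict (N j), fun j => ?_, fun i' => ?_, fun i' => ?_⟩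
  · rwa [dim_restrict, ← hsub.dim_extendByZero M']
  · rw [dim_restrict]
    exact hNL j
  · exact iSupIndep_restrictSubspace (hind _)
  · exact iSup_restrictSubspace_eq (hsup _)

theorem QuivRepAmenable.of_subquiverOf {Q' : FinQuiver} (hQ : QuivRepAmenable k Q)
    (hsub : Q'.SubquiverOf Q) : QuivRepAmenable k Q' :=
  QuivRepHyperfinite.preimage_extendByZero hsub hQ

/-- if `Q'` is a subquiver of `Q` and the family of all finite-dimensional
`k`-representations of `Q'` is not hyperfinite, then neither is the family of all
finite-dimensional `k`-representations of `Q`; i.e. if `kQ'` is not of amenable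
representation type, then neither is `kQ`. -/
theorem stmt_15 {k : Type u} [Field k] (Q Q' : FinQuiver) (hsub : Q'.SubquiverOf Q)
    (h : ¬ QuivRepAmenable k Q') :
    ¬ QuivRepAmenable k Q :=
  fun hQ => h (hQ.of_subquiverOf hsub)
end
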